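/- arXiv:2110.12414 — 7 statements merged into one kernel-verified Lean document; each statement's English description precedes it below -/
import Mathlib

section
/- Let u : ℝ² → ℝ be four times continuously differentiable on a neighborhood of (a,b). Then there exist constants C > 0 and h₀ > 0 such that for all h ∈ (0, h₀]: | ∂ₓ∂ᵧu(a,b) − (1/(2h²))·( u(a+h, b) − u(a+h, b−h) − u(a−h, b) + u(a−h, b−h) ) − (h/2)·∂ₓ∂ᵧ∂ᵧu(a,b) | ≤ C·h². -/
/-- Partial derivative in the first variable of `u : ℝ × ℝ → ℝ`. -/
noncomputable def pdx (u : ℝ × ℝ → ℝ) (p : ℝ × ℝ) : ℝ :=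
  deriv (fun t => u (t, p.2)) p.1

/-- Partial derivative in the second variable of `u : ℝ × ℝ → ℝ`. -/
noncomputable def pdy (u : ℝ × ℝ → ℝ) (p : ℝ × ℝ) : ℝ :=
  deriv (fun t => u (p.1, t)) p.2

open Set

lemma H1 {f : ℝ → ℝ} {I : Set ℝ} (hI : IsOpen I) {n : WithTop ℕ∞} (hf : ContDiffOn ℝ n f I)
    {c d : ℝ} (hcd : c < d) (hsub : Icc c d ⊆ I) {y : ℝ} (hy : y ∈ Icc c d)
    {m : ℕ} (hm : (m : WithTop ℕ∞) ≤ n) :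
    iteratedDerivWithin m f (Icc c d) y = iteratedDeriv m f y := by
  have hT : HasFTaylorSeriesUpToOn n f (ftaylorSeriesWithin ℝ f I) I :=
    hf.ftaylorSeriesWithin hI.uniqueDiffOn
  have h2 : ftaylorSeriesWithin ℝ f I y m = iteratedFDerivWithin ℝ m f (Icc c d) y :=
    (hT.mono hsub).eq_iteratedFDerivWithin_of_uniqueDiffOn hm
      (uniqueDiffOn_Icc hcd) hy
  have h3 : ftaylorSeriesWithin ℝ f I y m = iteratedFDeriv ℝ m f y := by
    have := iteratedFDerivWithin_of_isOpen (f := f) (𝕜 := ℝ) m hI (hsub hy)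
    simpa [ftaylorSeriesWithin] using this
  rw [iteratedDerivWithin_eq_iteratedFDerivWithin, iteratedDeriv_eq_iteratedFDeriv, ← h2, h3]

lemma taylorBoundR {f : ℝ → ℝ} {I : Set ℝ} (hI : IsOpen I) {n : ℕ}
    (hf : ContDiffOn ℝ (n + 1) f I) {c r M : ℝ} (hr : 0 < r)
    (hsub : Icc c (c + r) ⊆ I)
    (hM : ∀ t ∈ Icc c (c + r), |iteratedDeriv (n + 1) f t| ≤ M) :
    ∀ h : ℝ, 0 < h → h ≤ r →
      |f (c + h) - ∑ k ∈ Finset.range (n + 1), h ^ k / (Nat.factorial k : ℝ) * iteratedDeriv k f c|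
        ≤ M * h ^ (n + 1) := by
  intro h hh hhr
  have hch : c < c + h := by linarith
  have hsub' : Icc c (c + h) ⊆ I := fun t ht => hsub ⟨ht.1, by linarith [ht.2]⟩
  have hx : c + h ∈ Icc c (c + h) := ⟨by linarith, le_refl _⟩
  have hC : ∀ y ∈ Icc c (c + h),
      ‖iteratedDerivWithin (n + 1) f (Icc c (c + h)) y‖ ≤ M := by
    intro y hy
    rw [Real.norm_eq_abs, H1 (m := n + 1) hI hf hch hsub' hy (by exact_mod_cast le_rfl)]
    exact hM y ⟨hy.1, by linarith [hy.2]⟩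
  have hbound := taylor_mean_remainder_bound (f := f) (a := c) (b := c + h) (x := c + h)
    (n := n) (C := M) (by linarith) (hf.mono hsub') hx hC
  have hT : taylorWithinEval f n (Icc c (c + h)) c (c + h)
      = ∑ k ∈ Finset.range (n + 1), h ^ k / (Nat.factorial k : ℝ) * iteratedDeriv k f c := by
    rw [taylor_within_apply]
    refine Finset.sum_congr rfl fun k hk => ?_
    have hk' : (k : WithTop ℕ∞) ≤ (n : WithTop ℕ∞) + 1 := by
      have : k ≤ n + 1 := Nat.lt_succ_iff.1 (Finset.mem_range.1 hk) |>.trans (Nat.le_succ n)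
      exact_mod_cast Nat.cast_le.2 this
    rw [H1 (m := k) hI hf hch hsub' (left_mem_Icc.2 hch.le) hk']
    rw [smul_eq_mul, add_sub_cancel_left]
    ring
  rw [hT, Real.norm_eq_abs] at hbound
  refine hbound.trans ?_
  rw [add_sub_cancel_left]
  have hM0 : 0 ≤ M := le_trans (abs_nonneg _) (hM c (left_mem_Icc.2 (by linarith)))
  have hfac : (1:ℝ) ≤ (Nat.factorial n : ℝ) := by
    exact_mod_cast Nat.one_le_iff_ne_zero.2 (Nat.factorial_ne_zero n)
  rw [div_le_iff₀ (by positivity)]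
  nlinarith [pow_pos hh (n+1), mul_nonneg hM0 (pow_pos hh (n+1)).le]

lemma taylorBound {f : ℝ → ℝ} {I : Set ℝ} (hI : IsOpen I) {n : ℕ}
    (hf : ContDiffOn ℝ (n + 1) f I) {c r M : ℝ} (hr : 0 < r)
    (hsub : Icc (c - r) (c + r) ⊆ I)
    (hM : ∀ t ∈ Icc (c - r) (c + r), |iteratedDeriv (n + 1) f t| ≤ M) :
    ∀ h : ℝ, h ≠ 0 → |h| ≤ r →
      |f (c + h) - ∑ k ∈ Finset.range (n + 1), h ^ k / (Nat.factorial k : ℝ) * iteratedDeriv k f c|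
        ≤ M * |h| ^ (n + 1) := by
  intro h hne habs
  rcases hne.lt_or_gt with hneg | hpos
  · -- h < 0 : use reflection
    have habs' : -h ≤ r := by rw [abs_of_neg hneg] at habs; linarith
    set g : ℝ → ℝ := fun t => f (-t) with hg
    have hI' : IsOpen (Neg.neg ⁻¹' I : Set ℝ) := hI.preimage continuous_neg
    have hgs : ContDiffOn ℝ (n + 1) g (Neg.neg ⁻¹' I) :=
      hf.comp contDiff_neg.contDiffOn (fun t ht => ht)
    have hsub' : Icc (-c) (-c + r) ⊆ Neg.neg ⁻¹' I := by
      intro t ht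
      have : -t ∈ Icc (c - r) (c + r) := (by have h1 := ht.1; have h2 := ht.2; simp only [Set.mem_Icc] at ht ⊢; constructor <;> linarith)
      exact hsub this
    have hMg : ∀ t ∈ Icc (-c) (-c + r), |iteratedDeriv (n + 1) g t| ≤ M := by
      intro t ht
      rw [iteratedDeriv_comp_neg]
      have : -t ∈ Icc (c - r) (c + r) := (by have h1 := ht.1; have h2 := ht.2; simp only [Set.mem_Icc] at ht ⊢; constructor <;> linarith)
      simpa [abs_mul, abs_pow] using hM (-t) this
    have := taylorBoundR hI' hgs hr hsub' hMg (-h) (by linarith) habs'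
    have hgval : g (-c + -h) = f (c + h) := by simp [hg]; ring_nf
    have hsum : ∑ k ∈ Finset.range (n + 1),
        (-h) ^ k / (Nat.factorial k : ℝ) * iteratedDeriv k g (-c)
        = ∑ k ∈ Finset.range (n + 1),
          h ^ k / (Nat.factorial k : ℝ) * iteratedDeriv k f c := by
      refine Finset.sum_congr rfl fun k _ => ?_
      rw [show iteratedDeriv k g (-c) = (-1:ℝ) ^ k • iteratedDeriv k f (-(-c)) from
        iteratedDeriv_comp_neg k f (-c)]
      simp only [smul_eq_mul, neg_neg]
      rw [neg_pow h]
      ring_nf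
      rw [show (-1:ℝ) ^ (k * 2) = ((-1:ℝ) ^ 2) ^ k by rw [← pow_mul, mul_comm]]
      norm_num
    rw [hgval, hsum] at this
    refine this.trans_eq ?_
    rw [abs_of_neg hneg]
  · -- 0 < h
    have habs' : h ≤ r := by rwa [abs_of_pos hpos] at habs
    have hsub' : Icc c (c + r) ⊆ I := fun t ht => hsub ⟨by linarith [ht.1], ht.2⟩
    have hM' : ∀ t ∈ Icc c (c + r), |iteratedDeriv (n + 1) f t| ≤ M := fun t ht =>
      hM t ⟨by linarith [ht.1], ht.2⟩
    have := taylorBoundR hI hf hr hsub' hM' h hpos habs'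
    refine this.trans_eq ?_
    rw [abs_of_pos hpos]

lemma hasDerivAt_slice_x {v : ℝ × ℝ → ℝ} {q : ℝ × ℝ} (hv : DifferentiableAt ℝ v q) :
    HasDerivAt (fun t => v (t, q.2)) (fderiv ℝ v q (1, 0)) q.1 := by
  have hc : HasDerivAt (fun t : ℝ => (t, q.2)) ((1:ℝ), (0:ℝ)) q.1 := by
    simpa using (hasDerivAt_id q.1).prodMk (hasDerivAt_const q.1 q.2)
  have := hv.hasFDerivAt.comp_hasDerivAt q.1 (by simpa using hc)
  exact this

lemma hasDerivAt_slice_y {v : ℝ × ℝ → ℝ} {q : ℝ × ℝ} (hv : DifferentiableAt ℝ v q) :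
    HasDerivAt (fun t => v (q.1, t)) (fderiv ℝ v q (0, 1)) q.2 := by
  have hc : HasDerivAt (fun t : ℝ => (q.1, t)) ((0:ℝ), (1:ℝ)) q.2 := by
    simpa using (hasDerivAt_const q.2 q.1).prodMk (hasDerivAt_id q.2)
  have := hv.hasFDerivAt.comp_hasDerivAt q.2 (by simpa using hc)
  exact this

lemma pdx_eq {v : ℝ × ℝ → ℝ} {q : ℝ × ℝ} (hv : DifferentiableAt ℝ v q) :
    pdx v q = fderiv ℝ v q (1, 0) := (hasDerivAt_slice_x hv).deriv

lemma pdy_eq {v : ℝ × ℝ → ℝ} {q : ℝ × ℝ} (hv : DifferentiableAt ℝ v q) :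
    pdy v q = fderiv ℝ v q (0, 1) := (hasDerivAt_slice_y hv).deriv

lemma pdx_contDiffOn {v : ℝ × ℝ → ℝ} {s : Set (ℝ × ℝ)} (hs : IsOpen s)
    {m : WithTop ℕ∞} (hv : ContDiffOn ℝ (m + 1) v s) : ContDiffOn ℝ m (pdx v) s := by
  have h1 : ContDiffOn ℝ m (fderiv ℝ v) s := hv.fderiv_of_isOpen hs le_rfl
  have h2 : ContDiffOn ℝ m (fun q => fderiv ℝ v q (1, 0)) s :=
    (ContinuousLinearMap.apply ℝ ℝ ((1:ℝ), (0:ℝ))).contDiff.comp_contDiffOn h1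
  refine h2.congr fun q hq => pdx_eq ?_
  exact (hv.differentiableOn (by simp)).differentiableAt (hs.mem_nhds hq)

lemma pdy_contDiffOn {v : ℝ × ℝ → ℝ} {s : Set (ℝ × ℝ)} (hs : IsOpen s)
    {m : WithTop ℕ∞} (hv : ContDiffOn ℝ (m + 1) v s) : ContDiffOn ℝ m (pdy v) s := by
  have h1 : ContDiffOn ℝ m (fderiv ℝ v) s := hv.fderiv_of_isOpen hs le_rfl
  have h2 : ContDiffOn ℝ m (fun q => fderiv ℝ v q (0, 1)) s :=
    (ContinuousLinearMap.apply ℝ ℝ ((0:ℝ), (1:ℝ))).contDiff.comp_contDiffOn h1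
  refine h2.congr fun q hq => pdy_eq ?_
  exact (hv.differentiableOn (by simp)).differentiableAt (hs.mem_nhds hq)

lemma pdxy_repr {v : ℝ × ℝ → ℝ} {s : Set (ℝ × ℝ)} (hs : IsOpen s)
    (hv : ContDiffOn ℝ 2 v s) {p : ℝ × ℝ} (hp : p ∈ s) :
    pdx (pdy v) p = fderiv ℝ (fderiv ℝ v) p (1, 0) (0, 1) := by
  have hv2 : ContDiffAt ℝ 2 v p := (hv p hp).contDiffAt (hs.mem_nhds hp)
  have hD : DifferentiableAt ℝ (fderiv ℝ v) p :=
    (hv2.fderiv_right (m := 1) (by norm_num)).differentiableAt one_ne_zero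
  have hmem : ∀ᶠ t in nhds p.1, (t, p.2) ∈ s := by
    have hc : ContinuousAt (fun t : ℝ => (t, p.2)) p.1 := by fun_prop
    have : p = (p.1, p.2) := rfl
    exact hc.eventually_mem (hs.mem_nhds (this ▸ hp))
  have e1 : (fun t => pdy v (t, p.2)) =ᶠ[nhds p.1] fun t => fderiv ℝ v (t, p.2) (0, 1) := by
    filter_upwards [hmem] with t ht
    exact pdy_eq ((hv.differentiableOn (by norm_num)).differentiableAt (hs.mem_nhds ht))
  have key : HasDerivAt (fun t => fderiv ℝ v (t, p.2) (0, 1))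
      (fderiv ℝ (fderiv ℝ v) p (1, 0) (0, 1)) p.1 := by
    have hinner : HasDerivAt (fun t => fderiv ℝ v (t, p.2))
        (fderiv ℝ (fderiv ℝ v) p (1, 0)) p.1 := by
      have hc : HasDerivAt (fun t : ℝ => (t, p.2)) ((1:ℝ), (0:ℝ)) p.1 := by
        simpa using (hasDerivAt_id p.1).prodMk (hasDerivAt_const p.1 p.2)
      have := hD.hasFDerivAt.comp_hasDerivAt p.1 (by simpa [Prod.mk.eta] using hc)
      exact this
    have := hinner.clm_apply (hasDerivAt_const p.1 ((0:ℝ), (1:ℝ)))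
    simpa using this
  calc pdx (pdy v) p = deriv (fun t => pdy v (t, p.2)) p.1 := rfl
    _ = deriv (fun t => fderiv ℝ v (t, p.2) (0, 1)) p.1 := e1.deriv_eq
    _ = fderiv ℝ (fderiv ℝ v) p (1, 0) (0, 1) := key.deriv

lemma pdyx_repr {v : ℝ × ℝ → ℝ} {s : Set (ℝ × ℝ)} (hs : IsOpen s)
    (hv : ContDiffOn ℝ 2 v s) {p : ℝ × ℝ} (hp : p ∈ s) :
    pdy (pdx v) p = fderiv ℝ (fderiv ℝ v) p (0, 1) (1, 0) := by
  have hv2 : ContDiffAt ℝ 2 v p := (hv p hp).contDiffAt (hs.mem_nhds hp)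
  have hD : DifferentiableAt ℝ (fderiv ℝ v) p :=
    (hv2.fderiv_right (m := 1) (by norm_num)).differentiableAt one_ne_zero
  have hmem : ∀ᶠ t in nhds p.2, (p.1, t) ∈ s := by
    have hc : ContinuousAt (fun t : ℝ => (p.1, t)) p.2 := by fun_prop
    have : p = (p.1, p.2) := rfl
    exact hc.eventually_mem (hs.mem_nhds (this ▸ hp))
  have e1 : (fun t => pdx v (p.1, t)) =ᶠ[nhds p.2] fun t => fderiv ℝ v (p.1, t) (1, 0) := by
    filter_upwards [hmem] with t ht
    exact pdx_eq ((hv.differentiableOn (by norm_num)).differentiableAt (hs.mem_nhds ht))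
  have key : HasDerivAt (fun t => fderiv ℝ v (p.1, t) (1, 0))
      (fderiv ℝ (fderiv ℝ v) p (0, 1) (1, 0)) p.2 := by
    have hinner : HasDerivAt (fun t => fderiv ℝ v (p.1, t))
        (fderiv ℝ (fderiv ℝ v) p (0, 1)) p.2 := by
      have hc : HasDerivAt (fun t : ℝ => (p.1, t)) ((0:ℝ), (1:ℝ)) p.2 := by
        simpa using (hasDerivAt_const p.2 p.1).prodMk (hasDerivAt_id p.2)
      have := hD.hasFDerivAt.comp_hasDerivAt p.2 (by simpa [Prod.mk.eta] using hc)
      exact this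
    have := hinner.clm_apply (hasDerivAt_const p.2 ((1:ℝ), (0:ℝ)))
    simpa using this
  calc pdy (pdx v) p = deriv (fun t => pdx v (p.1, t)) p.2 := rfl
    _ = deriv (fun t => fderiv ℝ v (p.1, t) (1, 0)) p.2 := e1.deriv_eq
    _ = fderiv ℝ (fderiv ℝ v) p (0, 1) (1, 0) := key.deriv

lemma pdxy_comm {v : ℝ × ℝ → ℝ} {s : Set (ℝ × ℝ)} (hs : IsOpen s)
    (hv : ContDiffOn ℝ 2 v s) {p : ℝ × ℝ} (hp : p ∈ s) :
    pdx (pdy v) p = pdy (pdx v) p := by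
  rw [pdxy_repr hs hv hp, pdyx_repr hs hv hp]
  exact ((hv p hp).contDiffAt (hs.mem_nhds hp)).isSymmSndFDerivAt (by simp [minSmoothness_of_isRCLikeNormedField]) _ _

lemma iter_slice_x (k : ℕ) : ∀ (u : ℝ × ℝ → ℝ) (y : ℝ),
    iteratedDeriv k (fun x => u (x, y)) = fun x => (pdx^[k] u) (x, y) := by
  induction k with
  | zero => intro u y; simp
  | succ k ih =>
    intro u y
    rw [iteratedDeriv_succ']
    have : deriv (fun x => u (x, y)) = fun x => pdx u (x, y) := rfl
    rw [this, ih (pdx u) y, Function.iterate_succ_apply]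

lemma iter_slice_y (k : ℕ) : ∀ (u : ℝ × ℝ → ℝ) (x : ℝ),
    iteratedDeriv k (fun y => u (x, y)) = fun y => (pdy^[k] u) (x, y) := by
  induction k with
  | zero => intro u x; simp
  | succ k ih =>
    intro u x
    rw [iteratedDeriv_succ']
    have : deriv (fun y => u (x, y)) = fun y => pdy u (x, y) := rfl
    rw [this, ih (pdy u) x, Function.iterate_succ_apply]

set_option maxHeartbeats 2000000 in
lemma combine {h M1 M2 M3 A B X0b X1b X2b X3b X0c X1c X2c X3c u1 u2 u3 u4 : ℝ}
    (hh : 0 < h)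
    (E1 : |u1 - (X0b + h * X1b + h ^ 2 / 2 * X2b + h ^ 3 / 6 * X3b)| ≤ M1 * h ^ 4)
    (E2 : |u2 - (X0b + -h * X1b + (-h) ^ 2 / 2 * X2b + (-h) ^ 3 / 6 * X3b)| ≤ M1 * h ^ 4)
    (E3 : |u3 - (X0c + h * X1c + h ^ 2 / 2 * X2c + h ^ 3 / 6 * X3c)| ≤ M1 * h ^ 4)
    (E4 : |u4 - (X0c + -h * X1c + (-h) ^ 2 / 2 * X2c + (-h) ^ 3 / 6 * X3c)| ≤ M1 * h ^ 4)
    (E5 : |X1c - (X1b + -h * A + (-h) ^ 2 / 2 * B)| ≤ M2 * h ^ 3)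
    (E6 : |X3c - X3b| ≤ M3 * h ^ 1) :
    |A - 1 / (2 * h ^ 2) * (u1 - u3 - u2 + u4) - h / 2 * B|
      ≤ (2 * M1 + M2 + M3 / 6) * h ^ 2 := by
  rw [show X0b + -h * X1b + (-h) ^ 2 / 2 * X2b + (-h) ^ 3 / 6 * X3b
      = X0b - h * X1b + h ^ 2 / 2 * X2b - h ^ 3 / 6 * X3b by ring] at E2
  rw [show X0c + -h * X1c + (-h) ^ 2 / 2 * X2c + (-h) ^ 3 / 6 * X3c
      = X0c - h * X1c + h ^ 2 / 2 * X2c - h ^ 3 / 6 * X3c by ring] at E4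
  rw [show X1b + -h * A + (-h) ^ 2 / 2 * B = X1b - h * A + h ^ 2 / 2 * B by ring] at E5
  rw [show M3 * h ^ 1 = M3 * h by ring] at E6
  set r1 := u1 - (X0b + h * X1b + h ^ 2 / 2 * X2b + h ^ 3 / 6 * X3b) with hr1
  set r2 := u2 - (X0b - h * X1b + h ^ 2 / 2 * X2b - h ^ 3 / 6 * X3b) with hr2
  set r3 := u3 - (X0c + h * X1c + h ^ 2 / 2 * X2c + h ^ 3 / 6 * X3c) with hr3
  set r4 := u4 - (X0c - h * X1c + h ^ 2 / 2 * X2c - h ^ 3 / 6 * X3c) with hr4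
  set r5 := X1c - (X1b - h * A + h ^ 2 / 2 * B) with hr5
  set r6 := X3c - X3b with hr6
  have hu1 : u1 = X0b + h * X1b + h ^ 2 / 2 * X2b + h ^ 3 / 6 * X3b + r1 := by rw [hr1]; ring
  have hu2 : u2 = X0b - h * X1b + h ^ 2 / 2 * X2b - h ^ 3 / 6 * X3b + r2 := by rw [hr2]; ring
  have hu3 : u3 = X0c + h * X1c + h ^ 2 / 2 * X2c + h ^ 3 / 6 * X3c + r3 := by rw [hr3]; ring
  have hu4 : u4 = X0c - h * X1c + h ^ 2 / 2 * X2c - h ^ 3 / 6 * X3c + r4 := by rw [hr4]; ring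
  have hX1c : X1c = X1b - h * A + h ^ 2 / 2 * B + r5 := by rw [hr5]; ring
  have hX3c : X3c = X3b + r6 := by rw [hr6]; ring
  have key : A - 1 / (2 * h ^ 2) * (u1 - u3 - u2 + u4) - h / 2 * B
      = r5 / h + h / 6 * r6 - (r1 - r3 - r2 + r4) / (2 * h ^ 2) := by
    rw [hu1, hu2, hu3, hu4, hX1c, hX3c]
    field_simp
    ring
  rw [key]
  have hh2 : (0:ℝ) < h ^ 2 := by positivity
  have b5 : |r5 / h| ≤ M2 * h ^ 2 := by
    rw [abs_div, abs_of_pos hh, div_le_iff₀ hh]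
    calc |r5| ≤ M2 * h ^ 3 := E5
      _ = M2 * h ^ 2 * h := by ring
  have b6 : |h / 6 * r6| ≤ M3 / 6 * h ^ 2 := by
    rw [abs_mul, abs_of_pos (by linarith : (0:ℝ) < h / 6)]
    calc h / 6 * |r6| ≤ h / 6 * (M3 * h) := by
          have hM3 : 0 ≤ M3 * h := le_trans (abs_nonneg _) E6
          nlinarith [abs_nonneg r6]
      _ = M3 / 6 * h ^ 2 := by ring
  have b14 : |(r1 - r3 - r2 + r4) / (2 * h ^ 2)| ≤ 2 * M1 * h ^ 2 := by
    rw [abs_div, abs_of_pos (by positivity : (0:ℝ) < 2 * h ^ 2), div_le_iff₀ (by positivity)]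
    have : |r1 - r3 - r2 + r4| ≤ |r1| + |r3| + |r2| + |r4| := by
      calc |r1 - r3 - r2 + r4| ≤ |r1 - r3 - r2| + |r4| := abs_add_le _ _
        _ ≤ |r1 - r3| + |r2| + |r4| := by linarith [abs_sub (r1 - r3) r2]
        _ ≤ |r1| + |r3| + |r2| + |r4| := by linarith [abs_sub r1 r3]
    calc |r1 - r3 - r2 + r4| ≤ |r1| + |r3| + |r2| + |r4| := this
      _ ≤ 4 * (M1 * h ^ 4) := by linarith
      _ = 2 * M1 * h ^ 2 * (2 * h ^ 2) := by ring
  calc |r5 / h + h / 6 * r6 - (r1 - r3 - r2 + r4) / (2 * h ^ 2)|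
      ≤ |r5 / h + h / 6 * r6| + |(r1 - r3 - r2 + r4) / (2 * h ^ 2)| := abs_sub _ _
    _ ≤ |r5 / h| + |h / 6 * r6| + |(r1 - r3 - r2 + r4) / (2 * h ^ 2)| := by
        linarith [abs_add_le (r5 / h) (h / 6 * r6)]
    _ ≤ (2 * M1 + M2 + M3 / 6) * h ^ 2 := by linarith

lemma sum4_expand (v : ℝ × ℝ → ℝ) (a y h' : ℝ) :
    ∑ k ∈ Finset.range (3 + 1), h' ^ k / (Nat.factorial k : ℝ)
        * iteratedDeriv k (fun x => v (x, y)) a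
      = v (a, y) + h' * pdx v (a, y) + h' ^ 2 / 2 * pdx (pdx v) (a, y)
        + h' ^ 3 / 6 * pdx (pdx (pdx v)) (a, y) := by
  have e0 : pdx^[0] v = v := rfl
  have e1 : pdx^[1] v = pdx v := rfl
  have e2 : pdx^[2] v = pdx (pdx v) := rfl
  have e3 : pdx^[3] v = pdx (pdx (pdx v)) := rfl
  simp only [iter_slice_x, Finset.sum_range_succ, Finset.sum_range_zero, e0, e1, e2, e3]
  norm_num [Nat.factorial]

lemma sum3_expand (v : ℝ × ℝ → ℝ) (a b h' : ℝ) :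
    ∑ k ∈ Finset.range (2 + 1), h' ^ k / (Nat.factorial k : ℝ)
        * iteratedDeriv k (fun y => v (a, y)) b
      = v (a, b) + h' * pdy v (a, b) + h' ^ 2 / 2 * pdy (pdy v) (a, b) := by
  have e0 : pdy^[0] v = v := rfl
  have e1 : pdy^[1] v = pdy v := rfl
  have e2 : pdy^[2] v = pdy (pdy v) := rfl
  simp only [iter_slice_y, Finset.sum_range_succ, Finset.sum_range_zero, e0, e1, e2]
  norm_num [Nat.factorial]

lemma sum1_expand (v : ℝ × ℝ → ℝ) (a b h' : ℝ) :
    ∑ k ∈ Finset.range (0 + 1), h' ^ k / (Nat.factorial k : ℝ)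
        * iteratedDeriv k (fun y => v (a, y)) b = v (a, b) := by
  simp [Nat.factorial]


/-- Biased finite-difference approximation of the mixed second derivative with its
explicit first-order correction term (paper's eq. (26), case 2 of Fig. 3). -/
theorem stmt_3 (u : ℝ × ℝ → ℝ) (a b : ℝ) (hu : ContDiffAt ℝ 4 u (a, b)) :
    ∃ C > (0:ℝ), ∃ h₀ > (0:ℝ), ∀ h ∈ Set.Ioc (0:ℝ) h₀,
      |pdx (pdy u) (a, b)
        - 1 / (2 * h ^ 2) *
            (u (a + h, b) - u (a + h, b - h) - u (a - h, b) + u (a - h, b - h))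
        - h / 2 * pdx (pdy (pdy u)) (a, b)| ≤ C * h ^ 2 := by
  obtain ⟨t, htn, hut⟩ := hu.contDiffOn (m := 4) le_rfl (by simp)
  obtain ⟨ε, hε, hball⟩ := Metric.mem_nhds_iff.1 htn
  set sx := Ioo (a - ε) (a + ε) with hsx
  set sy := Ioo (b - ε) (b + ε) with hsy
  set s := sx ×ˢ sy with hss
  have hs : IsOpen s := isOpen_Ioo.prod isOpen_Ioo
  have hsubt : s ⊆ t := by
    intro q hq
    apply hball
    rw [Metric.mem_ball, Prod.dist_eq]
    have h1 : q.1 ∈ sx := hq.1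
    have h2 : q.2 ∈ sy := hq.2
    rw [hsx, Set.mem_Ioo] at h1
    rw [hsy, Set.mem_Ioo] at h2
    simp only [Real.dist_eq]
    apply max_lt <;> rw [abs_sub_lt_iff] <;> constructor <;> linarith [h1.1, h1.2, h2.1, h2.2]
  have hu4 : ContDiffOn ℝ 4 u s := hut.mono hsubt
  have hp : (a, b) ∈ s := by
    refine ⟨?_, ?_⟩ <;> rw [Set.mem_Ioo] <;> constructor <;> simp <;> linarith
  set h₀ := ε / 2 with hh₀
  have hh₀pos : 0 < h₀ := half_pos hε
  -- smoothness chain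
  have hX1 : ContDiffOn ℝ 3 (pdx u) s := pdx_contDiffOn hs (hu4.of_le (by norm_num))
  have hX2 : ContDiffOn ℝ 2 (pdx (pdx u)) s := pdx_contDiffOn hs (hX1.of_le (by norm_num))
  have hX3 : ContDiffOn ℝ 1 (pdx (pdx (pdx u))) s := pdx_contDiffOn hs (hX2.of_le (by norm_num))
  have hX4 : ContDiffOn ℝ 0 (pdx (pdx (pdx (pdx u)))) s :=
    pdx_contDiffOn hs (hX3.of_le (by norm_num))
  have hY1 : ContDiffOn ℝ 2 (pdy (pdx u)) s := pdy_contDiffOn hs (hX1.of_le (by norm_num))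
  have hY2 : ContDiffOn ℝ 1 (pdy (pdy (pdx u))) s := pdy_contDiffOn hs (hY1.of_le (by norm_num))
  have hY3 : ContDiffOn ℝ 0 (pdy (pdy (pdy (pdx u)))) s :=
    pdy_contDiffOn hs (hY2.of_le (by norm_num))
  have hQ1 : ContDiffOn ℝ 0 (pdy (pdx (pdx (pdx u)))) s :=
    pdy_contDiffOn hs (hX3.of_le (by norm_num))
  -- compact box and bounds
  set K := Icc (a - h₀) (a + h₀) ×ˢ Icc (b - h₀) (b + h₀) with hK
  have hKs : K ⊆ s := by
    intro q hq
    have h1 := hq.1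
    have h2 := hq.2
    rw [Set.mem_Icc] at h1 h2
    refine ⟨?_, ?_⟩ <;> rw [Set.mem_Ioo] <;> constructor <;>
      simp only [hh₀] at h1 h2 <;> linarith [h1.1, h1.2, h2.1, h2.2]
  have hKc : IsCompact K := isCompact_Icc.prod isCompact_Icc
  obtain ⟨M1, hM1⟩ := hKc.exists_bound_of_continuousOn (hX4.continuousOn.mono hKs)
  obtain ⟨M2, hM2⟩ := hKc.exists_bound_of_continuousOn (hY3.continuousOn.mono hKs)
  obtain ⟨M3, hM3⟩ := hKc.exists_bound_of_continuousOn (hQ1.continuousOn.mono hKs)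
  have hpK : (a, b) ∈ K := by
    refine ⟨?_, ?_⟩ <;> rw [Set.mem_Icc] <;> constructor <;> linarith
  have hM1n : 0 ≤ M1 := le_trans (norm_nonneg _) (hM1 _ hpK)
  have hM2n : 0 ≤ M2 := le_trans (norm_nonneg _) (hM2 _ hpK)
  have hM3n : 0 ≤ M3 := le_trans (norm_nonneg _) (hM3 _ hpK)
  have hsubx : Icc (a - h₀) (a + h₀) ⊆ sx := by
    intro x hx
    rw [Set.mem_Icc] at hx
    rw [hsx, Set.mem_Ioo]
    constructor <;> simp only [hh₀] at hx <;> linarith [hx.1, hx.2]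
  have hsuby : Icc (b - h₀) (b + h₀) ⊆ sy := by
    intro x hx
    rw [Set.mem_Icc] at hx
    rw [hsy, Set.mem_Ioo]
    constructor <;> simp only [hh₀] at hx <;> linarith [hx.1, hx.2]
  have hamem : a ∈ sx := hsubx ⟨by linarith, by linarith⟩
  -- Taylor in the x direction, uniform over y in the lower band
  have slice4 : ∀ y ∈ Icc (b - h₀) b, ∀ h' : ℝ, h' ≠ 0 → |h'| ≤ h₀ →
      |u (a + h', y) - (u (a, y) + h' * pdx u (a, y) + h' ^ 2 / 2 * pdx (pdx u) (a, y)
        + h' ^ 3 / 6 * pdx (pdx (pdx u)) (a, y))| ≤ M1 * |h'| ^ 4 := by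
    intro y hy h' hne habs
    rw [Set.mem_Icc] at hy
    have hyIcc : y ∈ Icc (b - h₀) (b + h₀) := ⟨hy.1, by linarith [hy.2]⟩
    have hyo : y ∈ sy := hsuby hyIcc
    have hf : ContDiffOn ℝ ((3:ℕ) + 1) (fun x => u (x, y)) sx := by
      have : ContDiffOn ℝ 4 (fun x => u (x, y)) sx :=
        hu4.comp ((contDiff_id.prodMk contDiff_const).contDiffOn) (fun x hx => ⟨hx, hyo⟩)
      exact this.of_le (by norm_num)
    have hMd : ∀ x ∈ Icc (a - h₀) (a + h₀),
        |iteratedDeriv (3 + 1) (fun x => u (x, y)) x| ≤ M1 := by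
      intro x hx
      have he : iteratedDeriv (3 + 1) (fun x => u (x, y)) x
          = pdx (pdx (pdx (pdx u))) (x, y) := by
        rw [show (3 + 1) = 4 from rfl, iter_slice_x]; rfl
      rw [he]
      exact le_trans (le_of_eq (Real.norm_eq_abs _).symm) (hM1 _ ⟨hx, hyIcc⟩)
    have := taylorBound isOpen_Ioo hf hh₀pos hsubx hMd h' hne habs
    rwa [sum4_expand] at this
  -- Taylor in the y direction for pdx u
  have slice3 : ∀ h' : ℝ, h' ≠ 0 → |h'| ≤ h₀ →
      |pdx u (a, b + h') - (pdx u (a, b) + h' * pdy (pdx u) (a, b)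
        + h' ^ 2 / 2 * pdy (pdy (pdx u)) (a, b))| ≤ M2 * |h'| ^ 3 := by
    intro h' hne habs
    have hf : ContDiffOn ℝ ((2:ℕ) + 1) (fun y => pdx u (a, y)) sy := by
      have : ContDiffOn ℝ 3 (fun y => pdx u (a, y)) sy :=
        hX1.comp ((contDiff_const.prodMk contDiff_id).contDiffOn) (fun y hy => ⟨hamem, hy⟩)
      exact this.of_le (by norm_num)
    have hMd : ∀ x ∈ Icc (b - h₀) (b + h₀),
        |iteratedDeriv (2 + 1) (fun y => pdx u (a, y)) x| ≤ M2 := by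
      intro x hx
      have he : iteratedDeriv (2 + 1) (fun y => pdx u (a, y)) x
          = pdy (pdy (pdy (pdx u))) (a, x) := by
        rw [show (2 + 1) = 3 from rfl, iter_slice_y]; rfl
      rw [he]
      exact le_trans (le_of_eq (Real.norm_eq_abs _).symm)
        (hM2 _ ⟨⟨by linarith, by linarith⟩, hx⟩)
    have := taylorBound isOpen_Ioo hf hh₀pos hsuby hMd h' hne habs
    rwa [sum3_expand] at this
  -- zeroth order Taylor for the third x-derivative
  have slice1 : ∀ h' : ℝ, h' ≠ 0 → |h'| ≤ h₀ →
      |pdx (pdx (pdx u)) (a, b + h') - pdx (pdx (pdx u)) (a, b)| ≤ M3 * |h'| ^ 1 := by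
    intro h' hne habs
    have hf : ContDiffOn ℝ ((0:ℕ) + 1) (fun y => pdx (pdx (pdx u)) (a, y)) sy := by
      have : ContDiffOn ℝ 1 (fun y => pdx (pdx (pdx u)) (a, y)) sy :=
        hX3.comp ((contDiff_const.prodMk contDiff_id).contDiffOn) (fun y hy => ⟨hamem, hy⟩)
      exact this.of_le (by norm_num)
    have hMd : ∀ x ∈ Icc (b - h₀) (b + h₀),
        |iteratedDeriv (0 + 1) (fun y => pdx (pdx (pdx u)) (a, y)) x| ≤ M3 := by
      intro x hx
      have he : iteratedDeriv (0 + 1) (fun y => pdx (pdx (pdx u)) (a, y)) x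
          = pdy (pdx (pdx (pdx u))) (a, x) := by
        rw [show (0 + 1) = 1 from rfl, iter_slice_y]; rfl
      rw [he]
      exact le_trans (le_of_eq (Real.norm_eq_abs _).symm)
        (hM3 _ ⟨⟨by linarith, by linarith⟩, hx⟩)
    have := taylorBound isOpen_Ioo hf hh₀pos hsuby hMd h' hne habs
    rwa [sum1_expand] at this
  -- Clairaut symmetries
  have hu2 : ContDiffOn ℝ 2 u s := hu4.of_le (by norm_num)
  have hA : pdx (pdy u) (a, b) = pdy (pdx u) (a, b) := pdxy_comm hs hu2 hp
  have hpdyu2 : ContDiffOn ℝ 2 (pdy u) s := pdy_contDiffOn hs (hu4.of_le (by norm_num))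
  have hB1 : pdx (pdy (pdy u)) (a, b) = pdy (pdx (pdy u)) (a, b) := pdxy_comm hs hpdyu2 hp
  have hB2 : pdy (pdx (pdy u)) (a, b) = pdy (pdy (pdx u)) (a, b) := by
    have hc : ContinuousAt (fun t0 : ℝ => (a, t0)) b := by fun_prop
    have hev : (fun t0 => pdx (pdy u) (a, t0)) =ᶠ[nhds b] (fun t0 => pdy (pdx u) (a, t0)) := by
      filter_upwards [hc.eventually_mem (hs.mem_nhds hp)] with t0 ht0
      exact pdxy_comm hs hu2 ht0
    exact hev.deriv_eq
  have hB : pdx (pdy (pdy u)) (a, b) = pdy (pdy (pdx u)) (a, b) := hB1.trans hB2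
  refine ⟨2 * M1 + M2 + M3 / 6 + 1, by linarith, h₀, hh₀pos, ?_⟩
  intro h hh
  obtain ⟨hh1, hh2⟩ := hh
  have hbK : b ∈ Icc (b - h₀) b := ⟨by linarith, le_rfl⟩
  have hbhK : b - h ∈ Icc (b - h₀) b := ⟨by linarith, by linarith⟩
  have habs : |h| ≤ h₀ := by rw [abs_of_pos hh1]; exact hh2
  have habs' : |(-h)| ≤ h₀ := by rwa [abs_neg]
  have hhne : h ≠ 0 := ne_of_gt hh1
  have hhne' : (-h) ≠ 0 := neg_ne_zero.2 hhne
  have E1 := slice4 b hbK h hhne habs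
  have E2 := slice4 b hbK (-h) hhne' habs'
  have E3 := slice4 (b - h) hbhK h hhne habs
  have E4 := slice4 (b - h) hbhK (-h) hhne' habs'
  have E5 := slice3 (-h) hhne' habs'
  have E6 := slice1 (-h) hhne' habs'
  rw [abs_of_pos hh1] at E1 E3
  rw [abs_neg, abs_of_pos hh1] at E2 E4 E5 E6
  rw [show a + -h = a - h by ring] at E2 E4
  rw [show b + -h = b - h by ring] at E5 E6
  rw [hA, hB]
  have := combine hh1 E1 E2 E3 E4 E5 E6
  calc |pdy (pdx u) (a, b)
        - 1 / (2 * h ^ 2) *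
            (u (a + h, b) - u (a + h, b - h) - u (a - h, b) + u (a - h, b - h))
        - h / 2 * pdy (pdy (pdx u)) (a, b)|
      ≤ (2 * M1 + M2 + M3 / 6) * h ^ 2 := this
    _ ≤ (2 * M1 + M2 + M3 / 6 + 1) * h ^ 2 := by nlinarith [sq_nonneg h]
end

section
/- Let u : ℝ² → ℝ be four times continuously differentiable on a neighborhood of (a,b). Then there exist constants C > 0 and h₀ > 0 such that for all h ∈ (0, h₀]: | ∂ₓ∂ᵧu(a,b) − (1/(2h²))·( 2h·∂ₓu(a,b) − u(a+h, b−h) + u(a−h, b−h) ) − (h/2)·( ∂ₓ∂ᵧ∂ᵧu(a,b) + (1/3)·∂ₓ∂ₓ∂ₓu(a,b) ) | ≤ C·h². -/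
/-!
Along the two diagonals through `(a, b)`, a third-order Taylor expansion gives
`u ((a, b) + h • v) = T_v h + O(h⁴)` for `v = (1, -1)` and `v = (-1, -1)`. Half of the terms of
`T_(1,-1) - T_(-1,-1)` cancel and, by the symmetry of the second and third derivatives, what
remains is `2h ∂ₓu - 2h² ∂ₓ∂ᵧu + h³ (∂ₓ∂ᵧ∂ᵧu + ∂ₓ∂ₓ∂ₓu / 3)`; so the scheme errs by
`O(h⁴) / (2h²)`. The `O(t⁴)` remainder comes from the `O(t)` variation of the third derivative,
integrated three times by the mean value theorem.
-/

open Filter Asymptotics Topology Set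
open scoped Nat

section OneVariable

variable {F : Type*} [NormedAddCommGroup F] [NormedSpace ℝ F]

theorem isBigO_pow_succ_of_hasDerivAt {f f' : ℝ → F} {n : ℕ} (h0 : f 0 = 0)
    (hf : ∀ᶠ t in 𝓝 0, HasDerivAt f (f' t) t) (hf' : f' =O[𝓝 0] fun t => t ^ n) :
    f =O[𝓝 0] fun t => t ^ (n + 1) := by
  obtain ⟨c, hc, hcf'⟩ := hf'.exists_pos
  obtain ⟨δ, hδ, hball⟩ := Metric.eventually_nhds_iff_ball.mp (hf.and hcf'.bound)
  refine IsBigO.of_bound c (mem_of_superset (Metric.ball_mem_nhds 0 hδ) fun t ht => ?_)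
  have hsub : Metric.closedBall (0 : ℝ) |t| ⊆ Metric.ball 0 δ :=
    Metric.closedBall_subset_ball (by simpa using ht)
  have hbound : ∀ s ∈ Metric.closedBall (0 : ℝ) |t|, ‖f' s‖ ≤ c * |t| ^ n := fun s hs => by
    have hs' : |s| ≤ |t| := by simpa using hs
    calc ‖f' s‖ ≤ c * ‖s ^ n‖ := (hball s (hsub hs)).2
      _ ≤ c * |t| ^ n := by rw [norm_pow, Real.norm_eq_abs]; gcongr
  have := (convex_closedBall (0 : ℝ) |t|).norm_image_sub_le_of_norm_hasDerivWithin_le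
    (fun s hs => (hball s (hsub hs)).1.hasDerivWithinAt) hbound
    (Metric.mem_closedBall_self (abs_nonneg t)) (y := t) (by simp)
  simpa [h0, norm_pow, pow_succ, mul_assoc] using this

theorem hasDerivAt_smul_pow_div_factorial (c : F) (n : ℕ) (t : ℝ) :
    HasDerivAt (fun s : ℝ => (s ^ (n + 1) / (n + 1)!) • c) ((t ^ n / n !) • c) t := by
  convert ((hasDerivAt_pow (n + 1) t).div_const ((n + 1)! : ℝ)).smul_const c using 2
  rw [Nat.factorial_succ]
  push_cast
  field_simp

theorem isBigO_sub_taylor_three {g₀ g₁ g₂ g₃ : ℝ → F}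
    (h₀ : ∀ᶠ t in 𝓝 0, HasDerivAt g₀ (g₁ t) t) (h₁ : ∀ᶠ t in 𝓝 0, HasDerivAt g₁ (g₂ t) t)
    (h₂ : ∀ᶠ t in 𝓝 0, HasDerivAt g₂ (g₃ t) t) (h₃ : DifferentiableAt ℝ g₃ 0) :
    (fun t => g₀ t - (g₀ 0 + t • g₁ 0 + (t ^ 2 / 2) • g₂ 0 + (t ^ 3 / 6) • g₃ 0))
      =O[𝓝 0] fun t => t ^ 4 := by
  have r₃ : (fun t => g₃ t - g₃ 0) =O[𝓝 0] fun t => t ^ 1 := by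
    simpa using h₃.hasDerivAt.isBigO_sub
  have r₂ : (fun t => g₂ t - (g₂ 0 + t • g₃ 0)) =O[𝓝 0] fun t => t ^ 2 := by
    refine isBigO_pow_succ_of_hasDerivAt (by simp) (h₂.mono fun t ht => ?_) r₃
    convert ht.sub (((hasDerivAt_id t).smul_const (g₃ 0)).const_add (g₂ 0)) using 1
    · rfl
    · simp
  have r₁ : (fun t => g₁ t - (g₁ 0 + t • g₂ 0 + (t ^ 2 / 2) • g₃ 0)) =O[𝓝 0]
      fun t => t ^ 3 := by
    refine isBigO_pow_succ_of_hasDerivAt (by simp) (h₁.mono fun t ht => ?_) r₂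
    convert ht.sub ((((hasDerivAt_id t).smul_const (g₂ 0)).const_add (g₁ 0)).add
      (hasDerivAt_smul_pow_div_factorial (g₃ 0) 1 t)) using 1
    · ext s; simp
    · simp
  refine isBigO_pow_succ_of_hasDerivAt (by simp) (h₀.mono fun t ht => ?_) r₁
  convert ht.sub (((((hasDerivAt_id t).smul_const (g₁ 0)).const_add (g₀ 0)).add
      (hasDerivAt_smul_pow_div_factorial (g₂ 0) 1 t)).add
      (hasDerivAt_smul_pow_div_factorial (g₃ 0) 2 t)) using 1
  · ext s; simp [Nat.factorial]
  · simp [Nat.factorial]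

theorem exists_pos_bound_Ioc_of_isBigO {α : Type*} [Norm α] {f : ℝ → α} {n : ℕ}
    (hf : f =O[𝓝 0] fun t => t ^ n) :
    ∃ C > 0, ∃ h₀ > 0, ∀ h ∈ Ioc (0 : ℝ) h₀, ‖f h‖ ≤ C * h ^ n := by
  obtain ⟨C, hC, hCf⟩ := hf.exists_pos
  obtain ⟨δ, hδ, hball⟩ := Metric.eventually_nhds_iff_ball.mp hCf.bound
  refine ⟨C, hC, δ / 2, by positivity, fun h hh => ?_⟩
  have hhδ : h ∈ Metric.ball 0 δ := by
    rw [Metric.mem_ball, Real.dist_0_eq_abs, abs_of_pos hh.1]; linarith [hh.2]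
  simpa [abs_of_pos hh.1] using hball h hhδ

end OneVariable

section

variable {E F G H : Type*} [NormedAddCommGroup E] [NormedSpace ℝ E] [NormedAddCommGroup F]
  [NormedSpace ℝ F] [NormedAddCommGroup G] [NormedSpace ℝ G] [NormedAddCommGroup H]
  [NormedSpace ℝ H]

theorem hasDerivAt_comp_of_eventuallyEq {f g : E → F} {γ : ℝ → E} {v : E} {t : ℝ}
    (hγ : HasDerivAt γ v t) (hfg : f =ᶠ[𝓝 (γ t)] g) (hg : DifferentiableAt ℝ g (γ t)) :
    HasDerivAt (fun s => f (γ s)) (fderiv ℝ g (γ t) v) t :=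
  (hg.hasFDerivAt.comp_hasDerivAt t hγ).congr_of_eventuallyEq (hfg.comp_tendsto hγ.continuousAt)

theorem hasDerivAt_comp_line {g : E → F} {p v : E} {t : ℝ}
    (hg : DifferentiableAt ℝ g (p + t • v)) :
    HasDerivAt (fun s : ℝ => g (p + s • v)) (fderiv ℝ g (p + t • v) v) t :=
  hasDerivAt_comp_of_eventuallyEq (((hasDerivAt_id t).smul_const v).const_add p)
    EventuallyEq.rfl hg |>.congr_deriv (by simp)

theorem fderiv_clm_apply_const {c : E → G →L[ℝ] F} {x : E} (hc : DifferentiableAt ℝ c x)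
    (w : G) (v : E) : fderiv ℝ (fun q => c q w) x v = fderiv ℝ c x v w := by
  simp [fderiv_clm_apply hc (differentiableAt_const w)]

theorem fderiv_clm_apply_const₂ {c : E → G →L[ℝ] H →L[ℝ] F} {x : E}
    (hc : DifferentiableAt ℝ c x) (w₁ : G) (w₂ : H) (v : E) :
    fderiv ℝ (fun q => c q w₁ w₂) x v = fderiv ℝ c x v w₁ w₂ := by
  rw [fderiv_clm_apply_const (hc.clm_apply (differentiableAt_const w₁)),
    fderiv_clm_apply_const hc]

variable {u : E → F} {p : E}

theorem ContDiffAt.differentiableAt_fderiv (hu : ContDiffAt ℝ 2 u p) :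
    DifferentiableAt ℝ (fderiv ℝ u) p :=
  (hu.fderiv_right (m := 1) le_rfl).differentiableAt one_ne_zero

theorem ContDiffAt.differentiableAt_fderiv_fderiv (hu : ContDiffAt ℝ 3 u p) :
    DifferentiableAt ℝ (fderiv ℝ (fderiv ℝ u)) p :=
  (hu.fderiv_right (m := 2) le_rfl).differentiableAt_fderiv

theorem ContDiffAt.differentiableAt_fderiv_fderiv_fderiv (hu : ContDiffAt ℝ 4 u p) :
    DifferentiableAt ℝ (fderiv ℝ (fderiv ℝ (fderiv ℝ u))) p :=
  (hu.fderiv_right (m := 3) le_rfl).differentiableAt_fderiv_fderiv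

theorem ContDiffAt.fderiv_fderiv_fderiv_swap_left (hu : ContDiffAt ℝ 3 u p) (x y z : E) :
    fderiv ℝ (fderiv ℝ (fderiv ℝ u)) p x y z = fderiv ℝ (fderiv ℝ (fderiv ℝ u)) p y x z :=
  congrArg (· z) (((hu.fderiv_right (m := 2) le_rfl).isSymmSndFDerivAt (by simp)).eq x y)

theorem ContDiffAt.fderiv_fderiv_fderiv_swap_right (hu : ContDiffAt ℝ 3 u p) (x y z : E) :
    fderiv ℝ (fderiv ℝ (fderiv ℝ u)) p x y z = fderiv ℝ (fderiv ℝ (fderiv ℝ u)) p x z y := by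
  have hsymm : (fun q => fderiv ℝ (fderiv ℝ u) q y z) =ᶠ[𝓝 p]
      fun q => fderiv ℝ (fderiv ℝ u) q z y :=
    (hu.eventually (by simp)).mono fun q hq => (hq.isSymmSndFDerivAt (by norm_num)).eq y z
  rw [← fderiv_clm_apply_const₂ hu.differentiableAt_fderiv_fderiv,
    ← fderiv_clm_apply_const₂ hu.differentiableAt_fderiv_fderiv, hsymm.fderiv_eq]

theorem ContDiffAt.isBigO_sub_taylor_three_line (hu : ContDiffAt ℝ 4 u p) (v : E) :
    (fun t : ℝ => u (p + t • v) - (u p + t • fderiv ℝ u p v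
      + (t ^ 2 / 2) • fderiv ℝ (fderiv ℝ u) p v v
      + (t ^ 3 / 6) • fderiv ℝ (fderiv ℝ (fderiv ℝ u)) p v v v)) =O[𝓝 0] fun t => t ^ 4 := by
  have hline : Tendsto (fun t : ℝ => p + t • v) (𝓝 0) (𝓝 p) := by
    simpa using ((continuous_id.smul continuous_const).const_add p).tendsto (0 : ℝ)
  have hev : ∀ᶠ t in 𝓝 (0 : ℝ), ContDiffAt ℝ 4 u (p + t • v) :=
    hline.eventually (hu.eventually (by simp))
  have h₀ := hev.mono fun t ht => hasDerivAt_comp_line (ht.differentiableAt (by norm_num))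
  have h₁ := hev.mono fun t ht => by
    have hD := (ht.of_le (by norm_num : (2 : WithTop ℕ∞) ≤ 4)).differentiableAt_fderiv
    simpa only [fderiv_clm_apply_const hD] using
      hasDerivAt_comp_line (hD.clm_apply (differentiableAt_const v))
  have h₂ := hev.mono fun t ht => by
    have hD := (ht.of_le (by norm_num : (3 : WithTop ℕ∞) ≤ 4)).differentiableAt_fderiv_fderiv
    simpa only [fderiv_clm_apply_const₂ hD] using
      hasDerivAt_comp_line ((hD.clm_apply (differentiableAt_const v)).clm_apply
        (differentiableAt_const v))
  have h₃ : DifferentiableAt ℝ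
      (fun t : ℝ => fderiv ℝ (fderiv ℝ (fderiv ℝ u)) (p + t • v) v v v) 0 := by
    have hD : DifferentiableAt ℝ (fderiv ℝ (fderiv ℝ (fderiv ℝ u))) (p + (0 : ℝ) • v) := by
      simpa using hu.differentiableAt_fderiv_fderiv_fderiv
    exact (((hasDerivAt_comp_line hD).differentiableAt.clm_apply
      (differentiableAt_const v)).clm_apply (differentiableAt_const v)).clm_apply
      (differentiableAt_const v)
  simpa using isBigO_sub_taylor_three h₀ h₁ h₂ h₃

end

section Partials

variable {G H : Type*} [NormedAddCommGroup G] [NormedSpace ℝ G] [NormedAddCommGroup H]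
  [NormedSpace ℝ H] {u f g : ℝ × ℝ → ℝ} {p : ℝ × ℝ}

theorem pdx_eventuallyEq_fderiv (hfg : f =ᶠ[𝓝 p] g)
    (hg : ∀ᶠ q in 𝓝 p, DifferentiableAt ℝ g q) :
    pdx f =ᶠ[𝓝 p] fun q => fderiv ℝ g q (1, 0) := by
  filter_upwards [hfg.eventuallyEq_nhds, hg] with q hfq hgq
  exact (hasDerivAt_comp_of_eventuallyEq
    ((hasDerivAt_id q.1).prodMk (hasDerivAt_const q.1 q.2)) hfq hgq).deriv

theorem pdy_eventuallyEq_fderiv (hfg : f =ᶠ[𝓝 p] g)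
    (hg : ∀ᶠ q in 𝓝 p, DifferentiableAt ℝ g q) :
    pdy f =ᶠ[𝓝 p] fun q => fderiv ℝ g q (0, 1) := by
  filter_upwards [hfg.eventuallyEq_nhds, hg] with q hfq hgq
  exact (hasDerivAt_comp_of_eventuallyEq
    ((hasDerivAt_const q.2 q.1).prodMk (hasDerivAt_id q.2)) hfq hgq).deriv

theorem pdx_eventuallyEq_fderiv_apply {c : ℝ × ℝ → G →L[ℝ] ℝ} {w : G}
    (hf : f =ᶠ[𝓝 p] fun q => c q w) (hc : ∀ᶠ q in 𝓝 p, DifferentiableAt ℝ c q) :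
    pdx f =ᶠ[𝓝 p] fun q => fderiv ℝ c q (1, 0) w :=
  (pdx_eventuallyEq_fderiv hf (hc.mono fun _ hq => hq.clm_apply (differentiableAt_const w))).trans
    (hc.mono fun _ hq => fderiv_clm_apply_const hq w _)

theorem pdy_eventuallyEq_fderiv_apply {c : ℝ × ℝ → G →L[ℝ] ℝ} {w : G}
    (hf : f =ᶠ[𝓝 p] fun q => c q w) (hc : ∀ᶠ q in 𝓝 p, DifferentiableAt ℝ c q) :
    pdy f =ᶠ[𝓝 p] fun q => fderiv ℝ c q (0, 1) w :=
  (pdy_eventuallyEq_fderiv hf (hc.mono fun _ hq => hq.clm_apply (differentiableAt_const w))).trans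
    (hc.mono fun _ hq => fderiv_clm_apply_const hq w _)

theorem pdx_eventuallyEq_fderiv_apply₂ {c : ℝ × ℝ → G →L[ℝ] H →L[ℝ] ℝ} {w₁ : G} {w₂ : H}
    (hf : f =ᶠ[𝓝 p] fun q => c q w₁ w₂) (hc : ∀ᶠ q in 𝓝 p, DifferentiableAt ℝ c q) :
    pdx f =ᶠ[𝓝 p] fun q => fderiv ℝ c q (1, 0) w₁ w₂ :=
  (pdx_eventuallyEq_fderiv hf (hc.mono fun _ hq =>
    (hq.clm_apply (differentiableAt_const w₁)).clm_apply (differentiableAt_const w₂))).trans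
    (hc.mono fun _ hq => fderiv_clm_apply_const₂ hq w₁ w₂ _)

theorem pdx_eventuallyEq (hu : ContDiffAt ℝ 1 u p) :
    pdx u =ᶠ[𝓝 p] fun q => fderiv ℝ u q (1, 0) :=
  pdx_eventuallyEq_fderiv .rfl ((hu.eventually (by simp)).mono fun _ hq =>
    hq.differentiableAt one_ne_zero)

theorem pdy_eventuallyEq (hu : ContDiffAt ℝ 1 u p) :
    pdy u =ᶠ[𝓝 p] fun q => fderiv ℝ u q (0, 1) :=
  pdy_eventuallyEq_fderiv .rfl ((hu.eventually (by simp)).mono fun _ hq =>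
    hq.differentiableAt one_ne_zero)

theorem pdx_pdx_eventuallyEq (hu : ContDiffAt ℝ 2 u p) :
    pdx (pdx u) =ᶠ[𝓝 p] fun q => fderiv ℝ (fderiv ℝ u) q (1, 0) (1, 0) :=
  pdx_eventuallyEq_fderiv_apply (pdx_eventuallyEq (hu.of_le (by norm_num)))
    ((hu.eventually (by simp)).mono fun _ hq => hq.differentiableAt_fderiv)

theorem pdy_pdy_eventuallyEq (hu : ContDiffAt ℝ 2 u p) :
    pdy (pdy u) =ᶠ[𝓝 p] fun q => fderiv ℝ (fderiv ℝ u) q (0, 1) (0, 1) :=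
  pdy_eventuallyEq_fderiv_apply (pdy_eventuallyEq (hu.of_le (by norm_num)))
    ((hu.eventually (by simp)).mono fun _ hq => hq.differentiableAt_fderiv)

theorem pdx_pdy_eventuallyEq (hu : ContDiffAt ℝ 2 u p) :
    pdx (pdy u) =ᶠ[𝓝 p] fun q => fderiv ℝ (fderiv ℝ u) q (1, 0) (0, 1) :=
  pdx_eventuallyEq_fderiv_apply (pdy_eventuallyEq (hu.of_le (by norm_num)))
    ((hu.eventually (by simp)).mono fun _ hq => hq.differentiableAt_fderiv)

theorem pdx_pdy_pdy_eventuallyEq (hu : ContDiffAt ℝ 3 u p) :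
    pdx (pdy (pdy u)) =ᶠ[𝓝 p]
      fun q => fderiv ℝ (fderiv ℝ (fderiv ℝ u)) q (1, 0) (0, 1) (0, 1) :=
  pdx_eventuallyEq_fderiv_apply₂ (pdy_pdy_eventuallyEq (hu.of_le (by norm_num)))
    ((hu.eventually (by simp)).mono fun _ hq => hq.differentiableAt_fderiv_fderiv)

theorem pdx_pdx_pdx_eventuallyEq (hu : ContDiffAt ℝ 3 u p) :
    pdx (pdx (pdx u)) =ᶠ[𝓝 p]
      fun q => fderiv ℝ (fderiv ℝ (fderiv ℝ u)) q (1, 0) (1, 0) (1, 0) :=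
  pdx_eventuallyEq_fderiv_apply₂ (pdx_pdx_eventuallyEq (hu.of_le (by norm_num)))
    ((hu.eventually (by simp)).mono fun _ hq => hq.differentiableAt_fderiv_fderiv)

theorem taylor_three_diagonals_sub (hu : ContDiffAt ℝ 3 u p) (h : ℝ) :
    (h • fderiv ℝ u p (1, -1) + (h ^ 2 / 2) • fderiv ℝ (fderiv ℝ u) p (1, -1) (1, -1)
      + (h ^ 3 / 6) • fderiv ℝ (fderiv ℝ (fderiv ℝ u)) p (1, -1) (1, -1) (1, -1))
    - (h • fderiv ℝ u p (-1, -1) + (h ^ 2 / 2) • fderiv ℝ (fderiv ℝ u) p (-1, -1) (-1, -1)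
      + (h ^ 3 / 6) • fderiv ℝ (fderiv ℝ (fderiv ℝ u)) p (-1, -1) (-1, -1) (-1, -1))
    = 2 * h * fderiv ℝ u p (1, 0) - 2 * h ^ 2 * fderiv ℝ (fderiv ℝ u) p (1, 0) (0, 1)
      + h ^ 3 * (fderiv ℝ (fderiv ℝ (fderiv ℝ u)) p (1, 0) (0, 1) (0, 1)
        + 1 / 3 * fderiv ℝ (fderiv ℝ (fderiv ℝ u)) p (1, 0) (1, 0) (1, 0)) := by
  set x : ℝ × ℝ := (1, 0)
  set y : ℝ × ℝ := (0, 1)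
  have hyx := (hu.isSymmSndFDerivAt (by norm_num)).eq y x
  have hyxy := hu.fderiv_fderiv_fderiv_swap_left y x y
  have hyyx := hu.fderiv_fderiv_fderiv_swap_right y y x
  have hv : ((1 : ℝ), (-1 : ℝ)) = x - y := by simp [x, y]
  have hw : ((-1 : ℝ), (-1 : ℝ)) = -x - y := by simp [x, y]
  simp only [hv, hw, map_sub, map_neg, sub_apply, neg_apply, smul_eq_mul]
  rw [hyx, hyyx.trans hyxy, ← hyxy]
  ring

end Partials

/-- Finite-difference approximation of the mixed second derivative using the first-order
derivative `∂ₓu` at the center point, with its explicit first-order correction terms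
(paper's eq. (28), case 4 of Fig. 3). -/
theorem stmt_5 (u : ℝ × ℝ → ℝ) (a b : ℝ) (hu : ContDiffAt ℝ 4 u (a, b)) :
    ∃ C > (0:ℝ), ∃ h₀ > (0:ℝ), ∀ h ∈ Set.Ioc (0:ℝ) h₀,
      |pdx (pdy u) (a, b)
        - 1 / (2 * h ^ 2) *
            (2 * h * pdx u (a, b) - u (a + h, b - h) + u (a - h, b - h))
        - h / 2 * (pdx (pdy (pdy u)) (a, b) + 1 / 3 * pdx (pdx (pdx u)) (a, b))|
        ≤ C * h ^ 2 := by
  have hu₃ : ContDiffAt ℝ 3 u (a, b) := hu.of_le (by norm_num)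
  obtain ⟨C, hC, h₀, hh₀, hbound⟩ := exists_pos_bound_Ioc_of_isBigO
    ((hu.isBigO_sub_taylor_three_line ((1, -1) : ℝ × ℝ)).sub
      (hu.isBigO_sub_taylor_three_line ((-1, -1) : ℝ × ℝ)))
  refine ⟨C / 2, by positivity, h₀, hh₀, fun h hh => ?_⟩
  have hpos : 0 < 2 * h ^ 2 := by have := hh.1; positivity
  have hv : (a + h, b - h) = (a, b) + h • ((1, -1) : ℝ × ℝ) := by ext <;> simp [sub_eq_add_neg]
  have hw : (a - h, b - h) = (a, b) + h • ((-1, -1) : ℝ × ℝ) := by ext <;> simp [sub_eq_add_neg]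
  rw [(pdx_eventuallyEq (hu.of_le (by norm_num))).self_of_nhds,
    (pdx_pdy_eventuallyEq (hu.of_le (by norm_num))).self_of_nhds,
    (pdx_pdy_pdy_eventuallyEq hu₃).self_of_nhds, (pdx_pdx_pdx_eventuallyEq hu₃).self_of_nhds,
    hv, hw]
  have scale : ∀ x y : ℝ, x * (2 * h ^ 2) = y → |y| ≤ C * h ^ 4 → |x| ≤ C / 2 * h ^ 2 :=
    fun x y hxy hy => by
      rw [← hxy, abs_mul, abs_of_pos hpos] at hy
      nlinarith
  -- `x` unifies with the error of the scheme, `y` with the difference of the Taylor remainders.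
  refine scale _ _ ?_ (Real.norm_eq_abs _ ▸ hbound h hh)
  have hdiff := taylor_three_diagonals_sub hu₃ h
  have hh0 : h ≠ 0 := hh.1.ne'
  simp only [smul_eq_mul] at hdiff ⊢
  linear_combination (norm := skip) hdiff
  field_simp
  ring
end

section
/- Let u : ℝ² → ℝ be four times continuously differentiable on a neighborhood of (a,b). Then there exist constants C > 0 and h₀ > 0 such that for all h ∈ (0, h₀]: | ∂ₓ∂ᵧu(a,b) − (1/h²)·( h·∂ₓu(a,b) − (h²/2)·∂ₓ∂ₓu(a,b) − u(a, b−h) + u(a−h, b−h) ) − (h/2)·( ∂ₓ∂ᵧ∂ᵧu(a,b) + ∂ₓ∂ₓ∂ᵧu(a,b) + (1/3)·∂ₓ∂ₓ∂ₓu(a,b) ) | ≤ C·h². -/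
open scoped ContDiff Topology
open Set


lemma pdx_hasDerivAt {g : ℝ × ℝ → ℝ} {p : ℝ × ℝ} (hg : DifferentiableAt ℝ g p) :
    HasDerivAt (fun t => g (t, p.2)) (fderiv ℝ g p (1, 0)) p.1 := by
  have h1 : HasDerivAt (fun t : ℝ => ((t, p.2) : ℝ × ℝ)) ((1 : ℝ), (0 : ℝ)) p.1 :=
    (hasDerivAt_id _).prodMk (hasDerivAt_const _ _)
  exact hg.hasFDerivAt.comp_hasDerivAt p.1 h1

lemma pdy_hasDerivAt {g : ℝ × ℝ → ℝ} {p : ℝ × ℝ} (hg : DifferentiableAt ℝ g p) :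
    HasDerivAt (fun t => g (p.1, t)) (fderiv ℝ g p (0, 1)) p.2 := by
  have h1 : HasDerivAt (fun t : ℝ => ((p.1, t) : ℝ × ℝ)) ((0 : ℝ), (1 : ℝ)) p.2 :=
    (hasDerivAt_const _ _).prodMk (hasDerivAt_id _)
  exact hg.hasFDerivAt.comp_hasDerivAt p.2 h1

lemma pdx_eq_s6 {g : ℝ × ℝ → ℝ} {p : ℝ × ℝ} (hg : DifferentiableAt ℝ g p) :
    pdx g p = fderiv ℝ g p (1, 0) := (pdx_hasDerivAt hg).deriv

lemma pdy_eq_s6 {g : ℝ × ℝ → ℝ} {p : ℝ × ℝ} (hg : DifferentiableAt ℝ g p) :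
    pdy g p = fderiv ℝ g p (0, 1) := (pdy_hasDerivAt hg).deriv

lemma line_hasDerivAt {g : ℝ × ℝ → ℝ} {a b t : ℝ}
    (hg : DifferentiableAt ℝ g (a - t, b - t)) :
    HasDerivAt (fun s => g (a - s, b - s))
      (-(pdx g (a - t, b - t)) - pdy g (a - t, b - t)) t := by
  have h1 : HasDerivAt (fun s : ℝ => ((a - s, b - s) : ℝ × ℝ)) ((-1 : ℝ), (-1 : ℝ)) t :=
    ((hasDerivAt_id t).const_sub a).prodMk ((hasDerivAt_id t).const_sub b)
  have h2 := hg.hasFDerivAt.comp_hasDerivAt t h1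
  refine h2.congr_deriv (Eq.symm ?_)
  rw [pdx_eq_s6 hg, pdy_eq_s6 hg]
  have hv : ((-1, -1) : ℝ × ℝ) = -((1, 0) : ℝ × ℝ) - ((0, 1) : ℝ × ℝ) := by
    apply Prod.ext <;> norm_num
  rw [hv, map_sub, map_neg]

lemma vert_hasDerivAt {g : ℝ × ℝ → ℝ} {a b t : ℝ}
    (hg : DifferentiableAt ℝ g (a, b - t)) :
    HasDerivAt (fun s => g (a, b - s)) (-(pdy g (a, b - t))) t := by
  have h1 : HasDerivAt (fun s : ℝ => ((a, b - s) : ℝ × ℝ)) ((0 : ℝ), (-1 : ℝ)) t :=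
    (hasDerivAt_const _ _).prodMk ((hasDerivAt_id t).const_sub b)
  have h2 := hg.hasFDerivAt.comp_hasDerivAt t h1
  refine h2.congr_deriv (Eq.symm ?_)
  rw [pdy_eq_s6 hg]
  have hv : ((0, -1) : ℝ × ℝ) = -((0, 1) : ℝ × ℝ) := by apply Prod.ext <;> norm_num
  rw [hv, map_neg]

lemma contDiffAt_pdx {g : ℝ × ℝ → ℝ} {p : ℝ × ℝ} {m n : WithTop ℕ∞}
    (hg : ContDiffAt ℝ n g p) (hmn : m + 1 ≤ n) (h' : n ≠ ∞) :
    ContDiffAt ℝ m (pdx g) p := by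
  have hev : ∀ᶠ q in 𝓝 p, DifferentiableAt ℝ g q := by
    filter_upwards [hg.eventually h'] with q hq
    exact hq.differentiableAt (ne_of_gt (lt_of_lt_of_le (lt_of_lt_of_le zero_lt_one le_add_self) hmn))
  have heq : pdx g =ᶠ[𝓝 p] fun q => fderiv ℝ g q (1, 0) := by
    filter_upwards [hev] with q hq
    exact pdx_eq_s6 hq
  have h2 : ContDiffAt ℝ m (fun q => fderiv ℝ g q (1, 0)) p :=
    ((ContinuousLinearMap.apply ℝ ℝ ((1, 0) : ℝ × ℝ)).contDiff.contDiffAt).comp p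
      (hg.fderiv_right hmn)
  exact h2.congr_of_eventuallyEq heq

lemma contDiffAt_pdy {g : ℝ × ℝ → ℝ} {p : ℝ × ℝ} {m n : WithTop ℕ∞}
    (hg : ContDiffAt ℝ n g p) (hmn : m + 1 ≤ n) (h' : n ≠ ∞) :
    ContDiffAt ℝ m (pdy g) p := by
  have hev : ∀ᶠ q in 𝓝 p, DifferentiableAt ℝ g q := by
    filter_upwards [hg.eventually h'] with q hq
    exact hq.differentiableAt (ne_of_gt (lt_of_lt_of_le (lt_of_lt_of_le zero_lt_one le_add_self) hmn))
  have heq : pdy g =ᶠ[𝓝 p] fun q => fderiv ℝ g q (0, 1) := by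
    filter_upwards [hev] with q hq
    exact pdy_eq_s6 hq
  have h2 : ContDiffAt ℝ m (fun q => fderiv ℝ g q (0, 1)) p :=
    ((ContinuousLinearMap.apply ℝ ℝ ((0, 1) : ℝ × ℝ)).contDiff.contDiffAt).comp p
      (hg.fderiv_right hmn)
  exact h2.congr_of_eventuallyEq heq

lemma clairaut {g : ℝ × ℝ → ℝ} {p : ℝ × ℝ} {n : WithTop ℕ∞}
    (hg : ContDiffAt ℝ n g p) (hn : 2 ≤ n) (h' : n ≠ ∞) :
    pdx (pdy g) p = pdy (pdx g) p := by
  have h11 : (1 : WithTop ℕ∞) + 1 ≤ n := by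
    rw [show (1 : WithTop ℕ∞) + 1 = 2 by norm_num]; exact hn
  have hd2 : DifferentiableAt ℝ (fderiv ℝ g) p :=
    (hg.fderiv_right h11).differentiableAt one_ne_zero
  have hev : ∀ᶠ q in 𝓝 p, DifferentiableAt ℝ g q := by
    filter_upwards [hg.eventually h'] with q hq
    exact hq.differentiableAt (ne_of_gt (lt_of_lt_of_le (by norm_num) hn))
  have hx : ∀ v : ℝ × ℝ, HasFDerivAt (fun q => fderiv ℝ g q v)
      ((ContinuousLinearMap.apply ℝ ℝ v).comp (fderiv ℝ (fderiv ℝ g) p)) p := fun v =>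
    (ContinuousLinearMap.apply ℝ ℝ v).hasFDerivAt.comp p hd2.hasFDerivAt
  have h1 : pdx (pdy g) p = fderiv ℝ (fderiv ℝ g) p (1, 0) (0, 1) := by
    have hd : DifferentiableAt ℝ (pdy g) p :=
      (contDiffAt_pdy hg h11 h').differentiableAt one_ne_zero
    rw [pdx_eq_s6 hd]
    have heq : pdy g =ᶠ[𝓝 p] fun q => fderiv ℝ g q (0, 1) := by
      filter_upwards [hev] with q hq; exact pdy_eq_s6 hq
    rw [heq.fderiv_eq, (hx (0, 1)).fderiv]
    rfl
  have h2 : pdy (pdx g) p = fderiv ℝ (fderiv ℝ g) p (0, 1) (1, 0) := by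
    have hd : DifferentiableAt ℝ (pdx g) p :=
      (contDiffAt_pdx hg h11 h').differentiableAt one_ne_zero
    rw [pdy_eq_s6 hd]
    have heq : pdx g =ᶠ[𝓝 p] fun q => fderiv ℝ g q (1, 0) := by
      filter_upwards [hev] with q hq; exact pdx_eq_s6 hq
    rw [heq.fderiv_eq, (hx (1, 0)).fderiv]
    rfl
  rw [h1, h2, hg.isSymmSndFDerivAt (by simpa [minSmoothness_of_isRCLikeNormedField] using hn) (1, 0) (0, 1)]

lemma pdx_congr {f g : ℝ × ℝ → ℝ} {p : ℝ × ℝ} (h : f =ᶠ[𝓝 p] g) : pdx f p = pdx g p := by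
  apply Filter.EventuallyEq.deriv_eq
  have hc : Filter.Tendsto (fun t : ℝ => ((t, p.2) : ℝ × ℝ)) (𝓝 p.1) (𝓝 p) :=
    (continuous_id.prodMk continuous_const).continuousAt
  exact h.comp_tendsto hc

lemma pdy_congr {f g : ℝ × ℝ → ℝ} {p : ℝ × ℝ} (h : f =ᶠ[𝓝 p] g) : pdy f p = pdy g p := by
  apply Filter.EventuallyEq.deriv_eq
  have hc : Filter.Tendsto (fun t : ℝ => ((p.1, t) : ℝ × ℝ)) (𝓝 p.2) (𝓝 p) :=
    (continuous_const.prodMk continuous_id).continuousAt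
  exact h.comp_tendsto hc

noncomputable def Fm (u : ℝ × ℝ → ℝ) (a b t : ℝ) : ℝ :=
  u (a - t, b - t) - u (a, b - t) + t * pdx u (a, b) - t ^ 2 / 2 * pdx (pdx u) (a, b)
    - t ^ 2 * pdx (pdy u) (a, b)
    + t ^ 3 / 2 * (pdx (pdy (pdy u)) (a, b) + pdx (pdx (pdy u)) (a, b)
        + 1 / 3 * pdx (pdx (pdx u)) (a, b))

noncomputable def F1m (u : ℝ × ℝ → ℝ) (a b t : ℝ) : ℝ :=
  -(pdx u (a - t, b - t)) - pdy u (a - t, b - t) + pdy u (a, b - t) + pdx u (a, b)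
    - t * pdx (pdx u) (a, b) - 2 * t * pdx (pdy u) (a, b)
    + 3 * t ^ 2 / 2 * (pdx (pdy (pdy u)) (a, b) + pdx (pdx (pdy u)) (a, b)
        + 1 / 3 * pdx (pdx (pdx u)) (a, b))

noncomputable def F2m (u : ℝ × ℝ → ℝ) (a b t : ℝ) : ℝ :=
  pdx (pdx u) (a - t, b - t) + pdy (pdx u) (a - t, b - t) + pdx (pdy u) (a - t, b - t)
    + pdy (pdy u) (a - t, b - t) - pdy (pdy u) (a, b - t) - pdx (pdx u) (a, b)
    - 2 * pdx (pdy u) (a, b)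
    + 3 * t * (pdx (pdy (pdy u)) (a, b) + pdx (pdx (pdy u)) (a, b)
        + 1 / 3 * pdx (pdx (pdx u)) (a, b))

noncomputable def F3m (u : ℝ × ℝ → ℝ) (a b t : ℝ) : ℝ :=
  -(pdx (pdx (pdx u)) (a - t, b - t)) - pdy (pdx (pdx u)) (a - t, b - t)
    - pdx (pdy (pdx u)) (a - t, b - t) - pdy (pdy (pdx u)) (a - t, b - t)
    - pdx (pdx (pdy u)) (a - t, b - t) - pdy (pdx (pdy u)) (a - t, b - t)
    - pdx (pdy (pdy u)) (a - t, b - t) - pdy (pdy (pdy u)) (a - t, b - t)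
    + pdy (pdy (pdy u)) (a, b - t)
    + 3 * (pdx (pdy (pdy u)) (a, b) + pdx (pdx (pdy u)) (a, b)
        + 1 / 3 * pdx (pdx (pdx u)) (a, b))

lemma hasDerivAt_Fm {u : ℝ × ℝ → ℝ} {a b t : ℝ}
    (hd : DifferentiableAt ℝ u (a - t, b - t)) (hd' : DifferentiableAt ℝ u (a, b - t)) :
    HasDerivAt (Fm u a b) (F1m u a b t) t := by
  unfold Fm F1m
  have h1 := line_hasDerivAt hd
  have h2 := vert_hasDerivAt hd'
  have hA := (hasDerivAt_id t).mul_const (pdx u (a, b))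
  have hB := ((hasDerivAt_pow 2 t).div_const 2).mul_const (pdx (pdx u) (a, b))
  have hC := (hasDerivAt_pow 2 t).mul_const (pdx (pdy u) (a, b))
  have hD := ((hasDerivAt_pow 3 t).div_const 2).mul_const
    (pdx (pdy (pdy u)) (a, b) + pdx (pdx (pdy u)) (a, b) + 1 / 3 * pdx (pdx (pdx u)) (a, b))
  have htot := ((((h1.sub h2).add hA).sub hB).sub hC).add hD
  refine htot.congr_deriv (Eq.symm ?_)
  push_cast
  ring

lemma hasDerivAt_F1m {u : ℝ × ℝ → ℝ} {a b t : ℝ}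
    (hdx : DifferentiableAt ℝ (pdx u) (a - t, b - t))
    (hdy : DifferentiableAt ℝ (pdy u) (a - t, b - t))
    (hdy' : DifferentiableAt ℝ (pdy u) (a, b - t)) :
    HasDerivAt (F1m u a b) (F2m u a b t) t := by
  unfold F1m F2m
  have h1 := (line_hasDerivAt hdx).neg
  have h2 := line_hasDerivAt hdy
  have h3 := vert_hasDerivAt hdy'
  have h4 := hasDerivAt_const t (pdx u (a, b))
  have h5 := (hasDerivAt_id t).mul_const (pdx (pdx u) (a, b))
  have h6 := ((hasDerivAt_id t).const_mul (2 : ℝ)).mul_const (pdx (pdy u) (a, b))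
  have h7 := (((hasDerivAt_pow 2 t).const_mul (3 : ℝ)).div_const 2).mul_const
    (pdx (pdy (pdy u)) (a, b) + pdx (pdx (pdy u)) (a, b) + 1 / 3 * pdx (pdx (pdx u)) (a, b))
  have htot := (((((h1.sub h2).add h3).add h4).sub h5).sub h6).add h7
  refine htot.congr_deriv (Eq.symm ?_)
  push_cast
  ring

lemma hasDerivAt_F2m {u : ℝ × ℝ → ℝ} {a b t : ℝ}
    (hdxx : DifferentiableAt ℝ (pdx (pdx u)) (a - t, b - t))
    (hdyx : DifferentiableAt ℝ (pdy (pdx u)) (a - t, b - t))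
    (hdxy : DifferentiableAt ℝ (pdx (pdy u)) (a - t, b - t))
    (hdyy : DifferentiableAt ℝ (pdy (pdy u)) (a - t, b - t))
    (hdyy' : DifferentiableAt ℝ (pdy (pdy u)) (a, b - t)) :
    HasDerivAt (F2m u a b) (F3m u a b t) t := by
  unfold F2m F3m
  have l1 := line_hasDerivAt hdxx
  have l2 := line_hasDerivAt hdyx
  have l3 := line_hasDerivAt hdxy
  have l4 := line_hasDerivAt hdyy
  have v1 := vert_hasDerivAt hdyy'
  have h5 := hasDerivAt_const t (pdx (pdx u) (a, b))
  have h6 := hasDerivAt_const t (2 * pdx (pdy u) (a, b))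
  have h7 := ((hasDerivAt_id t).const_mul (3 : ℝ)).mul_const
    (pdx (pdy (pdy u)) (a, b) + pdx (pdx (pdy u)) (a, b) + 1 / 3 * pdx (pdx (pdx u)) (a, b))
  have htot := ((((((l1.add l2).add l3).add l4).sub v1).sub h5).sub h6).add h7
  refine htot.congr_deriv (Eq.symm ?_)
  ring
/-- Finite-difference approximation of the mixed second derivative using the first-order
derivative `∂ₓu` and the principal second-order derivative `∂ₓ∂ₓu` at the center point,
with its explicit first-order correction terms (paper's eq. (29), case 5 of Fig. 3). -/
theorem stmt_6 (u : ℝ × ℝ → ℝ) (a b : ℝ) (hu : ContDiffAt ℝ 4 u (a, b)) :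
    ∃ C > (0:ℝ), ∃ h₀ > (0:ℝ), ∀ h ∈ Set.Ioc (0:ℝ) h₀,
      |pdx (pdy u) (a, b)
        - 1 / h ^ 2 *
            (h * pdx u (a, b) - h ^ 2 / 2 * pdx (pdx u) (a, b)
              - u (a, b - h) + u (a - h, b - h))
        - h / 2 * (pdx (pdy (pdy u)) (a, b) + pdx (pdx (pdy u)) (a, b)
            + 1 / 3 * pdx (pdx (pdx u)) (a, b))| ≤ C * h ^ 2 := by
  obtain ⟨s, hs, hus⟩ := hu.contDiffOn le_rfl (by norm_num)
  obtain ⟨ε, εpos, hball⟩ := Metric.mem_nhds_iff.mp hs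
  set B := Metric.ball ((a, b) : ℝ × ℝ) ε with hBdef
  have hB : ContDiffOn ℝ 4 u B := hus.mono hball
  have hCA : ∀ r ∈ B, ContDiffAt ℝ 4 u r := fun r hr =>
    hB.contDiffAt (Metric.isOpen_ball.mem_nhds hr)
  set δ := ε / 2 with hδdef
  have δpos : 0 < δ := by positivity
  have hmemγ : ∀ t : ℝ, |t| ≤ δ → ((a - t, b - t) : ℝ × ℝ) ∈ B := by
    intro t ht
    rw [hBdef, Metric.mem_ball, Prod.dist_eq]
    have h1 : dist (a - t) a = |t| := by
      rw [Real.dist_eq, show a - t - a = -t by ring, abs_neg]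
    have h2 : dist (b - t) b = |t| := by
      rw [Real.dist_eq, show b - t - b = -t by ring, abs_neg]
    simp only [h1, h2, max_self]
    calc |t| ≤ δ := ht
      _ < ε := by rw [hδdef]; linarith
  have hmemη : ∀ t : ℝ, |t| ≤ δ → ((a, b - t) : ℝ × ℝ) ∈ B := by
    intro t ht
    rw [hBdef, Metric.mem_ball, Prod.dist_eq]
    have h1 : dist a a = 0 := dist_self a
    have h2 : dist (b - t) b = |t| := by
      rw [Real.dist_eq, show b - t - b = -t by ring, abs_neg]
    simp only [h1, h2]
    have : max 0 |t| = |t| := max_eq_right (abs_nonneg t)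
    rw [this]
    calc |t| ≤ δ := ht
      _ < ε := by rw [hδdef]; linarith
  have hPmem : ((a, b) : ℝ × ℝ) ∈ B := Metric.mem_ball_self εpos
  -- smoothness of partial derivatives at points of B
  have c3x : ∀ r ∈ B, ContDiffAt ℝ 3 (pdx u) r := fun r hr =>
    contDiffAt_pdx (hCA r hr) (by norm_num) (by norm_num)
  have c3y : ∀ r ∈ B, ContDiffAt ℝ 3 (pdy u) r := fun r hr =>
    contDiffAt_pdy (hCA r hr) (by norm_num) (by norm_num)
  have c2xx : ∀ r ∈ B, ContDiffAt ℝ 2 (pdx (pdx u)) r := fun r hr =>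
    contDiffAt_pdx (c3x r hr) (by norm_num) (by norm_num)
  have c2yx : ∀ r ∈ B, ContDiffAt ℝ 2 (pdy (pdx u)) r := fun r hr =>
    contDiffAt_pdy (c3x r hr) (by norm_num) (by norm_num)
  have c2xy : ∀ r ∈ B, ContDiffAt ℝ 2 (pdx (pdy u)) r := fun r hr =>
    contDiffAt_pdx (c3y r hr) (by norm_num) (by norm_num)
  have c2yy : ∀ r ∈ B, ContDiffAt ℝ 2 (pdy (pdy u)) r := fun r hr =>
    contDiffAt_pdy (c3y r hr) (by norm_num) (by norm_num)
  -- symmetry identities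
  have hsymm_ev : pdy (pdx u) =ᶠ[𝓝 ((a, b) : ℝ × ℝ)] pdx (pdy u) := by
    filter_upwards [Metric.isOpen_ball.mem_nhds hPmem] with r hr
    exact (clairaut (hCA r hr) (by norm_num) (by norm_num)).symm
  have hI0 : pdy (pdx u) ((a, b) : ℝ × ℝ) = pdx (pdy u) (a, b) :=
    (clairaut (hCA _ hPmem) (by norm_num) (by norm_num)).symm
  have hI1 : pdx (pdy (pdx u)) ((a, b) : ℝ × ℝ) = pdx (pdx (pdy u)) (a, b) :=
    pdx_congr hsymm_ev
  have hI2 : pdy (pdx (pdx u)) ((a, b) : ℝ × ℝ) = pdx (pdy (pdx u)) (a, b) :=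
    (clairaut (c3x _ hPmem) (by norm_num) (by norm_num)).symm
  have hI3 : pdy (pdy (pdx u)) ((a, b) : ℝ × ℝ) = pdy (pdx (pdy u)) (a, b) :=
    pdy_congr hsymm_ev
  have hI4 : pdy (pdx (pdy u)) ((a, b) : ℝ × ℝ) = pdx (pdy (pdy u)) (a, b) :=
    (clairaut (c3y _ hPmem) (by norm_num) (by norm_num)).symm
  -- vanishing at 0
  have hF0 : Fm u a b 0 = 0 := by unfold Fm; norm_num
  have hF10 : F1m u a b 0 = 0 := by unfold F1m; norm_num
  have hF20 : F2m u a b 0 = 0 := by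
    unfold F2m; norm_num; linarith [hI0]
  have hF30 : F3m u a b 0 = 0 := by
    unfold F3m; norm_num; linarith [hI1, hI2, hI3, hI4]
  -- smoothness of Fm on Icc 0 δ
  have hγc : ContDiff ℝ 4 (fun t : ℝ => ((a - t, b - t) : ℝ × ℝ)) :=
    (contDiff_const.sub contDiff_id).prodMk (contDiff_const.sub contDiff_id)
  have hηc : ContDiff ℝ 4 (fun t : ℝ => ((a, b - t) : ℝ × ℝ)) :=
    contDiff_const.prodMk (contDiff_const.sub contDiff_id)
  have habs : ∀ y ∈ Icc (0:ℝ) δ, |y| ≤ δ := fun y hy =>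
    abs_le.mpr ⟨by linarith [hy.1], hy.2⟩
  have hγmaps : MapsTo (fun t : ℝ => ((a - t, b - t) : ℝ × ℝ)) (Icc 0 δ) B :=
    fun y hy => hmemγ y (habs y hy)
  have hηmaps : MapsTo (fun t : ℝ => ((a, b - t) : ℝ × ℝ)) (Icc 0 δ) B :=
    fun y hy => hmemη y (habs y hy)
  have h1c : ContDiffOn ℝ 4 (fun t => u (a - t, b - t)) (Icc 0 δ) :=
    hB.comp hγc.contDiffOn hγmaps
  have h2c : ContDiffOn ℝ 4 (fun t => u (a, b - t)) (Icc 0 δ) :=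
    hB.comp hηc.contDiffOn hηmaps
  have hF : ContDiffOn ℝ 4 (Fm u a b) (Icc 0 δ) := by
    unfold Fm
    exact ((((h1c.sub h2c).add
      ((contDiff_id.mul contDiff_const).contDiffOn)).sub
      ((((contDiff_id.pow 2).div_const 2).mul contDiff_const).contDiffOn)).sub
      (((contDiff_id.pow 2).mul contDiff_const).contDiffOn)).add
      ((((contDiff_id.pow 3).div_const 2).mul contDiff_const).contDiffOn)
  -- differentiability data on Icc 0 δ
  have hUD : UniqueDiffOn ℝ (Icc (0:ℝ) δ) := uniqueDiffOn_Icc δpos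
  have hDF : ∀ y ∈ Icc (0:ℝ) δ, HasDerivAt (Fm u a b) (F1m u a b y) y := by
    intro y hy
    exact hasDerivAt_Fm
      ((hCA _ (hmemγ y (habs y hy))).differentiableAt (by norm_num))
      ((hCA _ (hmemη y (habs y hy))).differentiableAt (by norm_num))
  have hDF1 : ∀ y ∈ Icc (0:ℝ) δ, HasDerivAt (F1m u a b) (F2m u a b y) y := by
    intro y hy
    exact hasDerivAt_F1m
      ((contDiffAt_pdx (hCA _ (hmemγ y (habs y hy))) (by norm_num) (by norm_num)
        : ContDiffAt ℝ 1 _ _).differentiableAt one_ne_zero)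
      ((contDiffAt_pdy (hCA _ (hmemγ y (habs y hy))) (by norm_num) (by norm_num)
        : ContDiffAt ℝ 1 _ _).differentiableAt one_ne_zero)
      ((contDiffAt_pdy (hCA _ (hmemη y (habs y hy))) (by norm_num) (by norm_num)
        : ContDiffAt ℝ 1 _ _).differentiableAt one_ne_zero)
  have hDF2 : ∀ y ∈ Icc (0:ℝ) δ, HasDerivAt (F2m u a b) (F3m u a b y) y := by
    intro y hy
    exact hasDerivAt_F2m
      ((c2xx _ (hmemγ y (habs y hy))).differentiableAt (by norm_num))
      ((c2yx _ (hmemγ y (habs y hy))).differentiableAt (by norm_num))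
      ((c2xy _ (hmemγ y (habs y hy))).differentiableAt (by norm_num))
      ((c2yy _ (hmemγ y (habs y hy))).differentiableAt (by norm_num))
      ((c2yy _ (hmemη y (habs y hy))).differentiableAt (by norm_num))
  -- identify iterated derivatives within Icc 0 δ
  have e1 : ∀ y ∈ Icc (0:ℝ) δ,
      iteratedDerivWithin 1 (Fm u a b) (Icc 0 δ) y = F1m u a b y := by
    intro y hy
    rw [iteratedDerivWithin_one]
    rw [(hDF y hy).differentiableAt.derivWithin (hUD y hy), (hDF y hy).deriv]
  have e2 : ∀ y ∈ Icc (0:ℝ) δ,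
      iteratedDerivWithin 2 (Fm u a b) (Icc 0 δ) y = F2m u a b y := by
    intro y hy
    rw [show (2:ℕ) = 1 + 1 from rfl, iteratedDerivWithin_succ]
    rw [derivWithin_congr (fun z hz => e1 z hz) (e1 y hy)]
    rw [(hDF1 y hy).differentiableAt.derivWithin (hUD y hy), (hDF1 y hy).deriv]
  have e3 : ∀ y ∈ Icc (0:ℝ) δ,
      iteratedDerivWithin 3 (Fm u a b) (Icc 0 δ) y = F3m u a b y := by
    intro y hy
    rw [show (3:ℕ) = 2 + 1 from rfl, iteratedDerivWithin_succ]
    rw [derivWithin_congr (fun z hz => e2 z hz) (e2 y hy)]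
    rw [(hDF2 y hy).differentiableAt.derivWithin (hUD y hy), (hDF2 y hy).deriv]
  have h0mem : (0:ℝ) ∈ Icc (0:ℝ) δ := ⟨le_rfl, δpos.le⟩
  have htay : ∀ x : ℝ, taylorWithinEval (Fm u a b) 3 (Icc 0 δ) 0 x = 0 := by
    intro x
    rw [taylor_within_apply]
    rw [Finset.sum_range_succ, Finset.sum_range_succ, Finset.sum_range_succ,
      Finset.sum_range_one]
    rw [e3 0 h0mem, e2 0 h0mem, e1 0 h0mem]
    rw [iteratedDerivWithin_zero]
    rw [hF0, hF10, hF20, hF30]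
    simp
  have hF' : ContDiffOn ℝ ((3:ℕ) + 1) (Fm u a b) (Icc 0 δ) := by
    exact_mod_cast hF
  obtain ⟨C, hC⟩ := exists_taylor_mean_remainder_bound (n := 3) δpos.le hF'
  refine ⟨|C| + 1, by positivity, δ, δpos, ?_⟩
  intro h hh
  have hmem : h ∈ Icc (0:ℝ) δ := ⟨hh.1.le, hh.2⟩
  have hbound := hC h hmem
  rw [htay h, sub_zero, Real.norm_eq_abs] at hbound
  have hb2 : |Fm u a b h| ≤ (|C| + 1) * h ^ 4 := by
    have h4 : C * (h - 0) ^ (3 + 1) = C * h ^ 4 := by norm_num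
    rw [h4] at hbound
    have hCle : C ≤ |C| + 1 := le_trans (le_abs_self C) (by linarith [abs_nonneg C])
    calc |Fm u a b h| ≤ C * h ^ 4 := hbound
      _ ≤ (|C| + 1) * h ^ 4 := by
          apply mul_le_mul_of_nonneg_right hCle (by positivity)
  have hne : h ≠ 0 := ne_of_gt hh.1
  have hx : pdx (pdy u) ((a, b) : ℝ × ℝ)
        - 1 / h ^ 2 *
            (h * pdx u (a, b) - h ^ 2 / 2 * pdx (pdx u) (a, b)
              - u (a, b - h) + u (a - h, b - h))
        - h / 2 * (pdx (pdy (pdy u)) (a, b) + pdx (pdx (pdy u)) (a, b)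
            + 1 / 3 * pdx (pdx (pdx u)) (a, b)) = -(Fm u a b h) / h ^ 2 := by
    unfold Fm
    field_simp
    ring
  rw [hx, abs_div, abs_neg, abs_of_pos (by positivity : (0:ℝ) < h ^ 2)]
  rw [div_le_iff₀ (by positivity : (0:ℝ) < h ^ 2)]
  calc |Fm u a b h| ≤ (|C| + 1) * h ^ 4 := hb2
    _ = (|C| + 1) * h ^ 2 * h ^ 2 := by ring
end

section
/- Let s = (s₁, s₂) and n = (n₁, n₂) be vectors in ℝ² with ‖s‖ = ‖n‖ = 1 and ⟨s, n⟩ = 0. Then the determinant of the 3×3 matrix with rows (s₁², s₂², 2s₁s₂), (s₁n₁, s₂n₂, s₁n₂ + s₂n₁), and (1, 1, 0) has absolute value 1. -/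
open RealInnerProductSpace

/-- The coefficient matrix `G` of the 2D linear system for the jumps of the second
derivatives (paper's eq. (24)) has `|det G| = 1`, where `s` is the unit tangent and `n`
the unit normal, an orthonormal pair in `ℝ²`. -/
theorem stmt_10 (s n : EuclideanSpace ℝ (Fin 2))
    (hs : ‖s‖ = 1) (hn : ‖n‖ = 1) (hsn : ⟪s, n⟫ = 0) :
    |Matrix.det
      !![s 0 ^ 2, s 1 ^ 2, 2 * s 0 * s 1;
         s 0 * n 0, s 1 * n 1, s 0 * n 1 + s 1 * n 0;
         1, 1, 0]| = 1 := by
  have hs2 : s 0 ^ 2 + s 1 ^ 2 = 1 := by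
    have h1 : (⟪s, s⟫ : ℝ) = s 0 * s 0 + s 1 * s 1 := by
      simp only [PiLp.inner_apply, Fin.sum_univ_two, RCLike.inner_apply, conj_trivial]
    have h2 := real_inner_self_eq_norm_sq s
    rw [hs, h1] at h2
    nlinarith
  have hn2 : n 0 ^ 2 + n 1 ^ 2 = 1 := by
    have h1 : (⟪n, n⟫ : ℝ) = n 0 * n 0 + n 1 * n 1 := by
      simp only [PiLp.inner_apply, Fin.sum_univ_two, RCLike.inner_apply, conj_trivial]
    have h2 := real_inner_self_eq_norm_sq n
    rw [hn, h1] at h2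
    nlinarith
  have hsn2 : s 0 * n 0 + s 1 * n 1 = 0 := by
    simpa [PiLp.inner_apply, Fin.sum_univ_two, mul_comm] using hsn
  have hdet : Matrix.det
      !![s 0 ^ 2, s 1 ^ 2, 2 * s 0 * s 1;
         s 0 * n 0, s 1 * n 1, s 0 * n 1 + s 1 * n 0;
         1, 1, 0] = s 1 * n 0 - s 0 * n 1 := by
    simp [Matrix.det_fin_three]
    linear_combination (s 1 * n 0 - s 0 * n 1) * hs2
  rw [hdet, abs_eq (by norm_num : (0:ℝ) ≤ 1)]
  have hsq : (s 1 * n 0 - s 0 * n 1) * (s 1 * n 0 - s 0 * n 1) = 1 := by nlinarith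
  rcases mul_self_eq_one_iff.mp hsq with h | h
  · exact Or.inl h
  · exact Or.inr h
end

section
/- Let d ≥ 1, let w : ℝᵈ → ℝ be twice continuously differentiable on a neighborhood of x ∈ ℝᵈ, let n, s : ℝᵈ → ℝᵈ be differentiable at x, and let γ : ℝ → ℝᵈ be differentiable at 0 with γ(0) = x. Assume: (i) ⟨∇w(γ(t)), s(γ(t))⟩ = 0 for all t in some open interval around 0; (ii) ⟨n(γ(t)), s(γ(t))⟩ = 0 for all t in some open interval around 0; and (iii) ∇w(x) = ⟨∇w(x), n(x)⟩·n(x). Then ⟨∇²w(x)(γ′(0)), s(x)⟩ = ⟨∇w(x), n(x)⟩ · ⟨s(x), Dn(x)(γ′(0))⟩. -/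
open RealInnerProductSpace

/-- Key identity behind the paper's differentiated jump condition (18): differentiating
`⟨∇w, s⟩ = 0` along a curve `γ` in the interface, using `⟨n, s⟩ = 0` along `γ` and that
`∇w(x)` is parallel to the unit normal `n(x)`, yields the tangential-tangential component
of the Hessian of `w`. -/
theorem stmt_12 (d : ℕ) (hd : 1 ≤ d)
    (w : EuclideanSpace ℝ (Fin d) → ℝ) (x : EuclideanSpace ℝ (Fin d))
    (hw : ContDiffAt ℝ 2 w x)
    (n s : EuclideanSpace ℝ (Fin d) → EuclideanSpace ℝ (Fin d))
    (hn : DifferentiableAt ℝ n x) (hs : DifferentiableAt ℝ s x)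
    (γ : ℝ → EuclideanSpace ℝ (Fin d))
    (hγ : DifferentiableAt ℝ γ 0) (hγ0 : γ 0 = x)
    (h1 : ∃ δ > (0:ℝ), ∀ t ∈ Set.Ioo (-δ) δ, ⟪gradient w (γ t), s (γ t)⟫ = 0)
    (h2 : ∃ δ > (0:ℝ), ∀ t ∈ Set.Ioo (-δ) δ, ⟪n (γ t), s (γ t)⟫ = 0)
    (h3 : gradient w x = ⟪gradient w x, n x⟫ • n x) :
    ⟪fderiv ℝ (gradient w) x (deriv γ 0), s x⟫ =
      ⟪gradient w x, n x⟫ * ⟪s x, fderiv ℝ n x (deriv γ 0)⟫ := by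
  set v := deriv γ 0 with hv
  have hγ' : HasDerivAt γ v 0 := hγ.hasDerivAt
  -- differentiability of the gradient
  have hgrad : DifferentiableAt ℝ (gradient w) x := by
    have h1' : ContDiffAt ℝ 1 (fderiv ℝ w) x := hw.fderiv_right (by norm_num)
    have hd : DifferentiableAt ℝ (fderiv ℝ w) x := h1'.differentiableAt (by norm_num)
    have : gradient w = fun y =>
        (InnerProductSpace.toDual ℝ (EuclideanSpace ℝ (Fin d))).symm (fderiv ℝ w y) := rfl
    rw [this]
    exact ((InnerProductSpace.toDual ℝ (EuclideanSpace ℝ (Fin d))).symm.differentiableAt).comp x hd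
  have hx : DifferentiableAt ℝ (gradient w) (γ 0) := hγ0 ▸ hgrad
  have hnx : DifferentiableAt ℝ n (γ 0) := hγ0 ▸ hn
  have hsx : DifferentiableAt ℝ s (γ 0) := hγ0 ▸ hs
  have hgc : HasDerivAt (fun t => gradient w (γ t)) (fderiv ℝ (gradient w) x v) 0 := by
    have h := (hx.hasFDerivAt).comp_hasDerivAt 0 hγ'
    rw [hγ0] at h
    exact h
  have hsc : HasDerivAt (fun t => s (γ t)) (fderiv ℝ s x v) 0 := by
    have h := (hsx.hasFDerivAt).comp_hasDerivAt 0 hγ'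
    rw [hγ0] at h
    exact h
  have hnc : HasDerivAt (fun t => n (γ t)) (fderiv ℝ n x v) 0 := by
    have h := (hnx.hasFDerivAt).comp_hasDerivAt 0 hγ'
    rw [hγ0] at h
    exact h
  have hF : HasDerivAt (fun t => ⟪gradient w (γ t), s (γ t)⟫)
      (⟪gradient w x, fderiv ℝ s x v⟫ + ⟪fderiv ℝ (gradient w) x v, s x⟫) 0 := by
    simpa [hγ0] using hgc.inner ℝ hsc
  have hG : HasDerivAt (fun t => ⟪n (γ t), s (γ t)⟫)
      (⟪n x, fderiv ℝ s x v⟫ + ⟪fderiv ℝ n x v, s x⟫) 0 := by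
    simpa [hγ0] using hnc.inner ℝ hsc
  obtain ⟨δ1, hδ1, hF0⟩ := h1
  obtain ⟨δ2, hδ2, hG0⟩ := h2
  have hFz : HasDerivAt (fun t => ⟪gradient w (γ t), s (γ t)⟫) 0 0 := by
    apply (hasDerivAt_const (0:ℝ) (0:ℝ)).congr_of_eventuallyEq
    filter_upwards [Ioo_mem_nhds (by linarith : -δ1 < (0:ℝ)) hδ1] with t ht
    exact hF0 t ht
  have hGz : HasDerivAt (fun t => ⟪n (γ t), s (γ t)⟫) 0 0 := by
    apply (hasDerivAt_const (0:ℝ) (0:ℝ)).congr_of_eventuallyEq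
    filter_upwards [Ioo_mem_nhds (by linarith : -δ2 < (0:ℝ)) hδ2] with t ht
    exact hG0 t ht
  have e1 := hF.unique hFz
  have e2 := hG.unique hGz
  have e3 : ⟪gradient w x, fderiv ℝ s x v⟫ =
      ⟪gradient w x, n x⟫ * ⟪n x, fderiv ℝ s x v⟫ := by
    rw [h3, real_inner_smul_left]
    rw [← h3]
  rw [real_inner_comm (fderiv ℝ n x v) (s x)]
  linear_combination e1 - e3 - ⟪gradient w x, n x⟫ * e2
end

section
/- Let d ≥ 1, let u⁺, u⁻, τ : ℝᵈ → ℝ be twice continuously differentiable on a neighborhood of x ∈ ℝᵈ, let n, s : ℝᵈ → ℝᵈ be differentiable at x, let γ : ℝ → ℝᵈ be differentiable at 0 with γ(0) = x, and let ε⁺, ε⁻, σ ∈ ℝ with ε⁺ ≠ 0. Assume: (i) ⟨∇u⁺(γ(t)) − ∇u⁻(γ(t)) − ∇τ(γ(t)), s(γ(t))⟩ = 0 for all t in some open interval around 0; (ii) ⟨n(γ(t)), s(γ(t))⟩ = 0 for all t in some open interval around 0; (iii) ∇u⁺(x) − ∇u⁻(x) − ∇τ(x) = ⟨∇u⁺(x)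 − ∇u⁻(x) − ∇τ(x), n(x)⟩·n(x); and (iv) ε⁺⟨∇u⁺(x), n(x)⟩ − ε⁻⟨∇u⁻(x), n(x)⟩ = σ. Then ⟨(∇²u⁺(x) − ∇²u⁻(x))(γ′(0)), s(x)⟩ = ⟨∇²τ(x)(γ′(0)), s(x)⟩ + ( (1/ε⁺)·(σ − (ε⁺ − ε⁻)·⟨∇u⁻(x), n(x)⟩) − ⟨∇τ(x), n(x)⟩ ) · ⟨s(x), Dn(x)(γ′(0))⟩. -/
open RealInnerProductSpace

lemma grad_diff {d : ℕ} {f : EuclideanSpace ℝ (Fin d) → ℝ} {x : EuclideanSpace ℝ (Fin d)}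
    (hf : ContDiffAt ℝ 2 f x) : DifferentiableAt ℝ (gradient f) x := by
  have h1 : ContDiffAt ℝ 1 (fderiv ℝ f) x := hf.fderiv_right (by norm_num)
  have h2 : DifferentiableAt ℝ (fderiv ℝ f) x := h1.differentiableAt (by norm_num)
  exact ((InnerProductSpace.toDual ℝ (EuclideanSpace ℝ (Fin d))).symm.toContinuousLinearEquiv
    |>.differentiableAt).comp x h2

/-- Paper's eq. (18) for piecewise-constant diffusion coefficient: differentiating the
interface jump condition `[u] = τ` twice tangentially along a curve `γ` in the interface
expresses the tangential-tangential jump of the Hessian in terms of the Hessian of `τ`,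
the flux jump `σ`, the one-sided gradient `∇u⁻`, and the derivative of the normal field. -/
theorem stmt_13 (d : ℕ) (hd : 1 ≤ d)
    (up um τ : EuclideanSpace ℝ (Fin d) → ℝ) (x : EuclideanSpace ℝ (Fin d))
    (hup : ContDiffAt ℝ 2 up x) (hum : ContDiffAt ℝ 2 um x) (hτ : ContDiffAt ℝ 2 τ x)
    (n s : EuclideanSpace ℝ (Fin d) → EuclideanSpace ℝ (Fin d))
    (hn : DifferentiableAt ℝ n x) (hs : DifferentiableAt ℝ s x)
    (γ : ℝ → EuclideanSpace ℝ (Fin d))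
    (hγ : DifferentiableAt ℝ γ 0) (hγ0 : γ 0 = x)
    (εp εm σ : ℝ) (hεp : εp ≠ 0)
    (h1 : ∃ δ > (0:ℝ), ∀ t ∈ Set.Ioo (-δ) δ,
      ⟪gradient up (γ t) - gradient um (γ t) - gradient τ (γ t), s (γ t)⟫ = 0)
    (h2 : ∃ δ > (0:ℝ), ∀ t ∈ Set.Ioo (-δ) δ, ⟪n (γ t), s (γ t)⟫ = 0)
    (h3 : gradient up x - gradient um x - gradient τ x =
      ⟪gradient up x - gradient um x - gradient τ x, n x⟫ • n x)
    (h4 : εp * ⟪gradient up x, n x⟫ - εm * ⟪gradient um x, n x⟫ = σ) :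
    ⟪fderiv ℝ (gradient up) x (deriv γ 0) - fderiv ℝ (gradient um) x (deriv γ 0), s x⟫ =
      ⟪fderiv ℝ (gradient τ) x (deriv γ 0), s x⟫
        + (1 / εp * (σ - (εp - εm) * ⟪gradient um x, n x⟫) - ⟪gradient τ x, n x⟫)
            * ⟪s x, fderiv ℝ n x (deriv γ 0)⟫ := by
  set v := deriv γ 0 with hv
  have hγ' : HasDerivAt γ v 0 := hγ.hasDerivAt
  set w : EuclideanSpace ℝ (Fin d) → EuclideanSpace ℝ (Fin d) :=
    fun y => gradient up y - gradient um y - gradient τ y with hwdef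
  have hgup := grad_diff hup
  have hgum := grad_diff hum
  have hgτ := grad_diff hτ
  have hw : DifferentiableAt ℝ w x := (hgup.sub hgum).sub hgτ
  -- derivatives along γ
  have hwx : DifferentiableAt ℝ w (γ 0) := hγ0 ▸ hw
  have hsx : DifferentiableAt ℝ s (γ 0) := hγ0 ▸ hs
  have hnx : DifferentiableAt ℝ n (γ 0) := hγ0 ▸ hn
  have hwγ : HasDerivAt (fun t => w (γ t)) (fderiv ℝ w (γ 0) v) 0 :=
    hwx.hasFDerivAt.comp_hasDerivAt 0 hγ'
  have hsγ : HasDerivAt (fun t => s (γ t)) (fderiv ℝ s (γ 0) v) 0 :=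
    hsx.hasFDerivAt.comp_hasDerivAt 0 hγ'
  have hnγ : HasDerivAt (fun t => n (γ t)) (fderiv ℝ n (γ 0) v) 0 :=
    hnx.hasFDerivAt.comp_hasDerivAt 0 hγ'
  -- equation A
  have derA : HasDerivAt (fun t => ⟪w (γ t), s (γ t)⟫)
      (⟪w (γ 0), fderiv ℝ s (γ 0) v⟫ + ⟪fderiv ℝ w (γ 0) v, s (γ 0)⟫) 0 :=
    hwγ.inner ℝ hsγ
  have derB : HasDerivAt (fun t => ⟪n (γ t), s (γ t)⟫)
      (⟪n (γ 0), fderiv ℝ s (γ 0) v⟫ + ⟪fderiv ℝ n (γ 0) v, s (γ 0)⟫) 0 :=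
    hnγ.inner ℝ hsγ
  obtain ⟨δ1, hδ1, hA⟩ := h1
  obtain ⟨δ2, hδ2, hB⟩ := h2
  have memA : Set.Ioo (-δ1) δ1 ∈ nhds (0:ℝ) :=
    Ioo_mem_nhds (by linarith) hδ1
  have memB : Set.Ioo (-δ2) δ2 ∈ nhds (0:ℝ) :=
    Ioo_mem_nhds (by linarith) hδ2
  have eqA : (fun t => ⟪w (γ t), s (γ t)⟫) =ᶠ[nhds (0:ℝ)] fun _ => (0:ℝ) :=
    Filter.eventually_of_mem memA (fun t ht => hA t ht)
  have eqB : (fun t => ⟪n (γ t), s (γ t)⟫) =ᶠ[nhds (0:ℝ)] fun _ => (0:ℝ) :=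
    Filter.eventually_of_mem memB (fun t ht => hB t ht)
  have dA : ⟪w (γ 0), fderiv ℝ s (γ 0) v⟫ + ⟪fderiv ℝ w (γ 0) v, s (γ 0)⟫ = 0 := by
    have := derA.deriv
    rw [eqA.deriv_eq] at this
    simpa using this.symm
  have dB : ⟪n (γ 0), fderiv ℝ s (γ 0) v⟫ + ⟪fderiv ℝ n (γ 0) v, s (γ 0)⟫ = 0 := by
    have := derB.deriv
    rw [eqB.deriv_eq] at this
    simpa using this.symm
  rw [hγ0] at dA dB
  -- expand fderiv of w
  have hwf : fderiv ℝ w x v = fderiv ℝ (gradient up) x v - fderiv ℝ (gradient um) x v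
      - fderiv ℝ (gradient τ) x v := by
    rw [hwdef]
    rw [fderiv_fun_sub (f := fun y => gradient up y - gradient um y) (hgup.sub hgum) hgτ, fderiv_fun_sub hgup hgum]
    simp
  set c : ℝ := ⟪gradient up x - gradient um x - gradient τ x, n x⟫ with hc
  have hw3 : w x = c • n x := h3
  have key : ⟪fderiv ℝ w x v, s x⟫ = c * ⟪s x, fderiv ℝ n x v⟫ := by
    have h5 : ⟪w x, fderiv ℝ s x v⟫ = c * ⟪n x, fderiv ℝ s x v⟫ := by
      rw [hw3, real_inner_smul_left]
    have h6 : ⟪n x, fderiv ℝ s x v⟫ = - ⟪fderiv ℝ n x v, s x⟫ := by linarith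
    have h7 : ⟪s x, fderiv ℝ n x v⟫ = ⟪fderiv ℝ n x v, s x⟫ := real_inner_comm _ _
    linear_combination dA - h5 - c * h6 - c * h7
  rw [hwf, inner_sub_left, inner_sub_left] at key
  have hcval : c = 1 / εp * (σ - (εp - εm) * ⟪gradient um x, n x⟫) - ⟪gradient τ x, n x⟫ := by
    rw [hc, inner_sub_left, inner_sub_left, ← h4]
    field_simp
    ring
  rw [inner_sub_left]
  rw [← hcval]
  linarith [key]
end

section
/- Let d ≥ 1, let u⁺, u⁻ : ℝᵈ → ℝ be twice continuously differentiable on a neighborhood of x ∈ ℝᵈ, let σ, τ : ℝᵈ → ℝ be differentiable at x, let n : ℝᵈ → ℝᵈ be differentiable at x with ‖n(y)‖ = 1 for all y in a neighborhood of x, let γ : ℝ → ℝᵈ be differentiable at 0 with γ(0) = x and γ′(0) = v, let s₁, …, s_{d−1} ∈ ℝᵈ, and let ε⁺, ε⁻ ∈ ℝ with ε⁺ ≠ 0. Assume: (i) ε⁺⟨∇u⁺(γ(t)), n(γ(t))⟩ − ε⁻⟨∇u⁻(γ(t)), n(γ(t))⟩ = σ(γ(t)) for all t in some open interval around 0; and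 (ii) ∇u⁺(x) − ∇u⁻(x) = ⟨∇u⁺(x) − ∇u⁻(x), n(x)⟩·n(x) + Σ_{k=1}^{d−1} ⟨∇τ(x), s_k⟩·s_k. Then ⟨(∇²u⁺(x) − ∇²u⁻(x))(v), n(x)⟩ = (1/ε⁺)·⟨∇σ(x), v⟩ − ((ε⁺ − ε⁻)/ε⁺)·( ⟨∇²u⁻(x)(v), n(x)⟩ + ⟨∇u⁻(x), Dn(x)(v)⟩ ) − Σ_{k=1}^{d−1} ⟨∇τ(x), s_k⟩·⟨s_k, Dn(x)(v)⟩. -/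
open RealInnerProductSpace

/-- Paper's eq. (20) for piecewise-constant diffusion coefficient: differentiating the flux
jump condition `[ε∇u·n] = σ` tangentially along a curve `γ` in the interface with tangent
direction `v` expresses the tangential-normal jump of the Hessian in terms of `∇σ`, the
one-sided quantities `∇u⁻`, `∇²u⁻`, the tangential components `⟨∇τ, s_k⟩`, and the
derivative of the unit normal field `n`. -/
theorem stmt_14 (d : ℕ) (hd : 1 ≤ d)
    (up um : EuclideanSpace ℝ (Fin d) → ℝ) (x : EuclideanSpace ℝ (Fin d))
    (hup : ContDiffAt ℝ 2 up x) (hum : ContDiffAt ℝ 2 um x)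
    (σ τ : EuclideanSpace ℝ (Fin d) → ℝ)
    (hσ : DifferentiableAt ℝ σ x) (hτ : DifferentiableAt ℝ τ x)
    (n : EuclideanSpace ℝ (Fin d) → EuclideanSpace ℝ (Fin d))
    (hn : DifferentiableAt ℝ n x)
    (hunit : ∀ᶠ y in nhds x, ‖n y‖ = 1)
    (γ : ℝ → EuclideanSpace ℝ (Fin d))
    (hγ : DifferentiableAt ℝ γ 0) (hγ0 : γ 0 = x)
    (v : EuclideanSpace ℝ (Fin d)) (hv : deriv γ 0 = v)
    (s : Fin (d - 1) → EuclideanSpace ℝ (Fin d))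
    (εp εm : ℝ) (hεp : εp ≠ 0)
    (h1 : ∃ δ > (0:ℝ), ∀ t ∈ Set.Ioo (-δ) δ,
      εp * ⟪gradient up (γ t), n (γ t)⟫ - εm * ⟪gradient um (γ t), n (γ t)⟫ = σ (γ t))
    (h2 : gradient up x - gradient um x =
      ⟪gradient up x - gradient um x, n x⟫ • n x
        + ∑ k : Fin (d - 1), ⟪gradient τ x, s k⟫ • s k) :
    ⟪fderiv ℝ (gradient up) x v - fderiv ℝ (gradient um) x v, n x⟫ =
      1 / εp * ⟪gradient σ x, v⟫
        - (εp - εm) / εp *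
            (⟪fderiv ℝ (gradient um) x v, n x⟫ + ⟪gradient um x, fderiv ℝ n x v⟫)
        - ∑ k : Fin (d - 1), ⟪gradient τ x, s k⟫ * ⟪s k, fderiv ℝ n x v⟫ := by
  classical
  have hGup : DifferentiableAt ℝ (gradient up) x := by
    have h := (hup.fderiv_right (m := 1) (by norm_num)).differentiableAt one_ne_zero
    exact ((InnerProductSpace.toDual ℝ
      (EuclideanSpace ℝ (Fin d))).symm.differentiable.differentiableAt).comp x h
  have hGum : DifferentiableAt ℝ (gradient um) x := by
    have h := (hum.fderiv_right (m := 1) (by norm_num)).differentiableAt one_ne_zero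
    exact ((InnerProductSpace.toDual ℝ
      (EuclideanSpace ℝ (Fin d))).symm.differentiable.differentiableAt).comp x h
  set N := fderiv ℝ n x with hN
  set Hp := fderiv ℝ (gradient up) x with hHp
  set Hm := fderiv ℝ (gradient um) x with hHm
  -- Step B : ⟪n x, N v⟫ = 0
  have hnN : ⟪n x, N v⟫ = 0 := by
    have hin : HasFDerivAt (fun y => ⟪n y, n y⟫)
        ((fderivInnerCLM ℝ (n x, n x)).comp (N.prod N)) x :=
      hn.hasFDerivAt.inner ℝ hn.hasFDerivAt
    have heq : (fun y => ⟪n y, n y⟫) =ᶠ[nhds x] fun _ => (1:ℝ) := by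
      filter_upwards [hunit] with y hy
      rw [real_inner_self_eq_norm_sq, hy]; norm_num
    have hz : HasFDerivAt (fun y => ⟪n y, n y⟫) (0 : EuclideanSpace ℝ (Fin d) →L[ℝ] ℝ) x :=
      (hasFDerivAt_const (1:ℝ) x).congr_of_eventuallyEq heq
    have huniq := hin.unique hz
    have h5 := congrFun (congrArg
      (fun (L : EuclideanSpace ℝ (Fin d) →L[ℝ] ℝ) => (L : EuclideanSpace ℝ (Fin d) → ℝ)) huniq) v
    simp only [ContinuousLinearMap.coe_comp', Function.comp_apply,
      ContinuousLinearMap.prod_apply, fderivInnerCLM_apply, ContinuousLinearMap.coe_zero',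
      Pi.zero_apply, ContinuousLinearMap.zero_apply] at h5
    have hcomm : ⟪n x, N v⟫ = ⟪N v, n x⟫ := real_inner_comm _ _
    linarith
  -- Step A : differentiate the flux condition along γ
  have hA : HasFDerivAt (fun y => εp * ⟪gradient up y, n y⟫ - εm * ⟪gradient um y, n y⟫ - σ y)
      (εp • ((fderivInnerCLM ℝ (gradient up x, n x)).comp (Hp.prod N))
        - εm • ((fderivInnerCLM ℝ (gradient um x, n x)).comp (Hm.prod N))
        - fderiv ℝ σ x) x :=
    (((hGup.hasFDerivAt.inner ℝ hn.hasFDerivAt).const_mul εp).sub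
      ((hGum.hasFDerivAt.inner ℝ hn.hasFDerivAt).const_mul εm)).sub hσ.hasFDerivAt
  have hγ' : HasDerivAt γ v 0 := by rw [← hv]; exact hγ.hasDerivAt
  have hA' : HasFDerivAt (fun y => εp * ⟪gradient up y, n y⟫ - εm * ⟪gradient um y, n y⟫ - σ y)
      (εp • ((fderivInnerCLM ℝ (gradient up x, n x)).comp (Hp.prod N))
        - εm • ((fderivInnerCLM ℝ (gradient um x, n x)).comp (Hm.prod N))
        - fderiv ℝ σ x) (γ 0) := by rw [hγ0]; exact hA
  have hcomp := hA'.comp_hasDerivAt 0 hγ'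
  obtain ⟨δ, hδ, hδ2⟩ := h1
  have hev : ((fun y => εp * ⟪gradient up y, n y⟫ - εm * ⟪gradient um y, n y⟫ - σ y) ∘ γ)
      =ᶠ[nhds 0] fun _ => (0:ℝ) := by
    filter_upwards [Ioo_mem_nhds (by linarith : -δ < (0:ℝ)) hδ] with t ht
    simp only [Function.comp_apply]
    rw [hδ2 t ht]; ring
  have hz0 : HasDerivAt
      ((fun y => εp * ⟪gradient up y, n y⟫ - εm * ⟪gradient um y, n y⟫ - σ y) ∘ γ) 0 0 :=
    (hasDerivAt_const (0:ℝ) (0:ℝ)).congr_of_eventuallyEq hev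
  have key0 := hcomp.unique hz0
  simp only [ContinuousLinearMap.sub_apply, ContinuousLinearMap.smul_apply,
    ContinuousLinearMap.coe_comp', Function.comp_apply, ContinuousLinearMap.prod_apply,
    fderivInnerCLM_apply, smul_eq_mul] at key0
  have key : εp * (⟪gradient up x, N v⟫ + ⟪Hp v, n x⟫)
      - εm * (⟪gradient um x, N v⟫ + ⟪Hm v, n x⟫) - fderiv ℝ σ x v = 0 := by
    linarith [key0]
  have hgs : ⟪gradient σ x, v⟫ = fderiv ℝ σ x v := by
    rw [gradient, InnerProductSpace.toDual_symm_apply]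
  have h2' : ⟪gradient up x, N v⟫ - ⟪gradient um x, N v⟫
      = ∑ k : Fin (d - 1), ⟪gradient τ x, s k⟫ * ⟪s k, N v⟫ := by
    have h := congrArg (fun w : EuclideanSpace ℝ (Fin d) => ⟪w, N v⟫) h2
    rw [inner_add_left, real_inner_smul_left, hnN, mul_zero, zero_add, sum_inner,
      inner_sub_left] at h
    simp only [real_inner_smul_left] at h
    exact h
  have hfin : εp * ⟪Hp v, n x⟫ - εp * ⟪Hm v, n x⟫ =
      fderiv ℝ σ x v - (εp - εm) * (⟪Hm v, n x⟫ + ⟪gradient um x, N v⟫)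
        - εp * ∑ k : Fin (d - 1), ⟪gradient τ x, s k⟫ * ⟪s k, N v⟫ := by
    linear_combination key - εp * h2'
  rw [inner_sub_left, hgs]
  set a := ⟪Hp v, n x⟫ with ha
  set b := ⟪Hm v, n x⟫ with hb
  set c := ⟪gradient um x, N v⟫ with hc
  set S := ∑ k : Fin (d - 1), ⟪gradient τ x, s k⟫ * ⟪s k, N v⟫ with hS
  set Sσ := fderiv ℝ σ x v with hSσ
  field_simp
  linear_combination hfin
end
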